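/- arXiv:1007.1219 — 13 statements merged into one kernel-verified Lean document; each statement's English description precedes it below -/
import Mathlib

section
/- Let aA be the reflection of the circumcenter O of triangle ABC in the line BC, and let R = dist O A be the circumradius. Then dist aA B = R, dist aA C = R, and dist aA H = R, where H is the orthocenter of triangle ABC; that is, the circle with center aA and radius R passes through B, C and the orthocenter H. -/
open EuclideanGeometry

theorem brocard_circle_BHC (A B C O H aA : EuclideanSpace ℝ (Fin 2))
    (hABC : AffineIndependent ℝ ![A, B, C])
    (hO : O = (⟨![A, B, C], hABC⟩ : Affine.Triangle ℝ (EuclideanSpace ℝ (Fin 2))).circumcenter)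
    (hH : H = Affine.Triangle.orthocenter
      (⟨![A, B, C], hABC⟩ : Affine.Triangle ℝ (EuclideanSpace ℝ (Fin 2))))
    (haA : aA = EuclideanGeometry.reflection (affineSpan ℝ {B, C}) O) :
    dist aA B = dist O A ∧ dist aA C = dist O A ∧ dist aA H = dist O A := by
  set t : Affine.Triangle ℝ (EuclideanSpace ℝ (Fin 2)) := ⟨![A, B, C], hABC⟩ with ht
  have hpA : t.points 0 = A := rfl
  have hpB : t.points 1 = B := rfl
  have hpC : t.points 2 = C := rfl
  have hdA : dist O A = t.circumradius := by
    rw [hO, ← hpA, dist_comm]; exact t.dist_circumcenter_eq_circumradius 0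
  have hdB : dist O B = t.circumradius := by
    rw [hO, ← hpB, dist_comm]; exact t.dist_circumcenter_eq_circumradius 1
  have hdC : dist O C = t.circumradius := by
    rw [hO, ← hpC, dist_comm]; exact t.dist_circumcenter_eq_circumradius 2
  have hBs : B ∈ affineSpan ℝ ({B, C} : Set (EuclideanSpace ℝ (Fin 2))) :=
    left_mem_affineSpan_pair ℝ B C
  have hCs : C ∈ affineSpan ℝ ({B, C} : Set (EuclideanSpace ℝ (Fin 2))) :=
    right_mem_affineSpan_pair ℝ B C
  have h1 : dist aA B = dist O A := by
    rw [haA, dist_comm, dist_reflection_eq_of_mem _ hBs, dist_comm, hdB, hdA]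
  have h2 : dist aA C = dist O A := by
    rw [haA, dist_comm, dist_reflection_eq_of_mem _ hCs, dist_comm, hdC, hdA]
  refine ⟨h1, h2, ?_⟩
  set m : EuclideanSpace ℝ (Fin 2) := midpoint ℝ B C with hm
  have hms : m ∈ affineSpan ℝ ({B, C} : Set (EuclideanSpace ℝ (Fin 2))) :=
    AffineMap.lineMap_mem_affineSpan_pair (⅟2 : ℝ) B C
  have hv : (O -ᵥ m) ∈ (affineSpan ℝ ({B, C} : Set (EuclideanSpace ℝ (Fin 2)))).directionᗮ := by
    rw [direction_affineSpan, vectorSpan_pair, Submodule.mem_orthogonal_singleton_iff_inner_right]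
    have hc₁ : dist C m = dist B m := by
      rw [hm, dist_right_midpoint (𝕜 := ℝ), dist_left_midpoint (𝕜 := ℝ)]
    have hc₂ : dist C O = dist B O := by rw [dist_comm C O, dist_comm B O, hdB, hdC]
    have := inner_vsub_vsub_of_dist_eq_of_dist_eq hc₁ hc₂
    rwa [real_inner_comm] at this
  have haA' : aA = -(O -ᵥ m) +ᵥ m := by
    rw [haA]
    conv_lhs => rw [← vsub_vadd O m]
    exact reflection_orthogonal_vadd hms hv
  have hG : (Finset.univ : Finset (Fin 3)).centroid ℝ t.points = (3 : ℝ)⁻¹ • (A + B + C) := by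
    rw [Finset.centroid_def,
      Finset.affineCombination_eq_linear_combination _ _ _
        (Finset.univ.sum_centroidWeights_eq_one_of_card_ne_zero ℝ (by simp))]
    simp [Finset.centroidWeights, Fin.sum_univ_three, hpA, hpB, hpC, smul_add]
  have hH' : H = (3 : ℝ) • ((3 : ℝ)⁻¹ • (A + B + C) - O) + O := by
    rw [hH, Affine.Triangle.orthocenter_eq_smul_vsub_vadd_circumcenter, ← hO, hG,
      vsub_eq_sub, vadd_eq_add]
  have hm' : m = (2 : ℝ)⁻¹ • (B + C) := by
    rw [hm, midpoint_eq_smul_add, invOf_eq_inv]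
  have key : aA - H = O - A := by
    rw [haA', hH', hm', vsub_eq_sub, vadd_eq_add]
    module
  rw [dist_eq_norm, dist_eq_norm, key]
end

section
/- Let aA be the reflection of the circumcenter O of triangle ABC in the line BC. Then the midpoint of A and aA equals the midpoint of O and H, where H is the orthocenter; equivalently, aA is the image of A under the point reflection through the nine-point center (the midpoint of O and H). -/
open EuclideanGeometry

theorem reflection_circumcenter_midpoint (A B C O H aA : EuclideanSpace ℝ (Fin 2))
    (hABC : AffineIndependent ℝ ![A, B, C])
    (hO : O = (⟨![A, B, C], hABC⟩ : Affine.Triangle ℝ (EuclideanSpace ℝ (Fin 2))).circumcenter)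
    (hH : H = Affine.Triangle.orthocenter
      (⟨![A, B, C], hABC⟩ : Affine.Triangle ℝ (EuclideanSpace ℝ (Fin 2))))
    (haA : aA = EuclideanGeometry.reflection (affineSpan ℝ {B, C}) O) :
    midpoint ℝ A aA = midpoint ℝ O H := by
  set t : Affine.Triangle ℝ (EuclideanSpace ℝ (Fin 2)) := ⟨![A, B, C], hABC⟩ with ht
  have hA : A = t.points 0 := rfl
  have hBC : ({B, C} : Set (EuclideanSpace ℝ (Fin 2))) = t.points '' {1, 2} := by
    simp [ht, Set.image_pair]
  rw [midpoint_eq_midpoint_iff_vsub_eq_vsub]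
  have haA' : aA = (Finset.univ : Finset (Affine.Simplex.PointsWithCircumcenterIndex 2)).affineCombination ℝ
      t.pointsWithCircumcenter
      (Affine.Simplex.reflectionCircumcenterWeightsWithCircumcenter 1 2) := by
    rw [haA, hO,
      EuclideanGeometry.eq_reflection_of_eq_subspace (by rw [hBC]) t.circumcenter]
    exact t.reflection_circumcenter_eq_affineCombination_of_pointsWithCircumcenter (by decide)
  have hH' : H = (Finset.univ : Finset (Affine.Simplex.PointsWithCircumcenterIndex 2)).affineCombination ℝ
      t.pointsWithCircumcenter (Affine.Simplex.mongePointWeightsWithCircumcenter 0) := by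
    rw [hH, Affine.Triangle.orthocenter_eq_mongePoint]
    exact t.mongePoint_eq_affineCombination_of_pointsWithCircumcenter
  rw [hA, hO, haA', hH', t.point_eq_affineCombination_of_pointsWithCircumcenter,
    t.circumcenter_eq_affineCombination_of_pointsWithCircumcenter,
    Finset.affineCombination_vsub, Finset.affineCombination_vsub]
  congr 1
  funext j
  cases j with
  | pointIndex i =>
    fin_cases i <;>
      simp [Affine.Simplex.pointWeightsWithCircumcenter,
        Affine.Simplex.circumcenterWeightsWithCircumcenter,
        Affine.Simplex.mongePointWeightsWithCircumcenter,
        Affine.Simplex.reflectionCircumcenterWeightsWithCircumcenter]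
  | circumcenterIndex =>
    simp [Affine.Simplex.pointWeightsWithCircumcenter,
      Affine.Simplex.circumcenterWeightsWithCircumcenter,
      Affine.Simplex.mongePointWeightsWithCircumcenter,
      Affine.Simplex.reflectionCircumcenterWeightsWithCircumcenter]
    norm_num
end

section
/- The first Brocard point H+ lies on each of the three tangent circles: dist aB H+ = dist aB B, dist bC H+ = dist bC C, and dist cA H+ = dist cA A. That is, H+ lies on the circle through A and B tangent to BC at B, on the circle through B and C tangent to CA at C, and on the circle through C and A tangent to AB at A. -/
open EuclideanGeometry RealInnerProductSpace

/-!
With `Y` as origin, a point `P` lies on the circle with centre `O` through `Y` iff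
`‖P - Y‖² = 2 ⟪O - Y, P - Y⟫`. For the circle through `X`, `Y` tangent to `YZ` at `Y`, tangency
kills the `Z - Y` component of the right-hand side and the chord `XY` gives
`⟪O - Y, X - Y⟫ = c² / 2`; with the law of cosines for `⟪X - Y, Z - Y⟫`, both sides become
rational functions of `a, b, c` that agree at the Brocard weights. The three tangent circles are
the cyclic relabellings of one, and the Brocard weights are invariant under cyclic relabelling.
-/

section

variable {V : Type*} [NormedAddCommGroup V] [InnerProductSpace ℝ V]

theorem dist_eq_dist_iff_norm_sub_sq_eq_two_inner (O P Y : V) :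
    dist O P = dist O Y ↔ ‖P - Y‖ ^ 2 = 2 * ⟪O - Y, P - Y⟫ := by
  have hOP : dist O P ^ 2 = dist O Y ^ 2 - 2 * ⟪O - Y, P - Y⟫ + ‖P - Y‖ ^ 2 := by
    rw [dist_eq_norm, dist_eq_norm, ← norm_sub_sq_real, sub_sub_sub_cancel_right]
  rw [← sq_eq_sq₀ dist_nonneg dist_nonneg, hOP]
  constructor <;> intro h <;> linarith

theorem dist_brocard_eq_of_tangent_center {X Y Z O H : V} {a b c : ℝ}
    (ha : a = dist Y Z) (hb : b = dist Z X) (hc : c = dist X Y) (hXY : X ≠ Y)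
    (hH : H = (a^2*b^2 + b^2*c^2 + c^2*a^2)⁻¹ • ((a^2*c^2) • X + (a^2*b^2) • Y + (b^2*c^2) • Z))
    (hOX : dist O X = dist O Y) (hOZ : ⟪O - Y, Z - Y⟫ = 0) :
    dist O H = dist O Y := by
  set S := a^2*b^2 + b^2*c^2 + c^2*a^2
  have hS : S ≠ 0 := by
    have hc0 : 0 < c := hc ▸ dist_pos.2 hXY
    have hcab : c ≤ a + b := by
      rw [ha, hb, hc, add_comm, dist_comm Z X, dist_comm Y Z]; exact dist_triangle X Z Y
    have hab : 0 < a ^ 2 + b ^ 2 := by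
      nlinarith [mul_self_le_mul_self hc0.le hcab, sq_nonneg (a - b)]
    nlinarith [mul_pos (pow_pos hc0 2) hab, sq_nonneg (a * b)]
  have hHY : H - Y = S⁻¹ • ((a^2*c^2) • (X - Y) + (b^2*c^2) • (Z - Y)) := by
    rw [hH, eq_inv_smul_iff₀ hS, smul_sub, smul_inv_smul₀ hS]
    module
  have hu : ‖X - Y‖ = c := by rw [hc, dist_eq_norm]
  have hv : ‖Z - Y‖ = a := by rw [ha, dist_comm, dist_eq_norm]
  have huv : ⟪X - Y, Z - Y⟫ = (c^2 + a^2 - b^2) / 2 := by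
    have := norm_sub_sq_real (X - Y) (Z - Y)
    rw [sub_sub_sub_cancel_right, ← dist_eq_norm, dist_comm, ← hb, hu, hv] at this
    linarith
  have hOu : ⟪O - Y, X - Y⟫ = c^2 / 2 := by
    have := (dist_eq_dist_iff_norm_sub_sq_eq_two_inner O X Y).mp hOX
    rw [hu] at this; linarith
  rw [dist_eq_dist_iff_norm_sub_sq_eq_two_inner, hHY]
  simp only [norm_smul, mul_pow, norm_add_sq_real, inner_add_right, real_inner_smul_left,
    real_inner_smul_right, Real.norm_eq_abs, sq_abs, hu, hv, huv, hOu, hOZ]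
  field_simp
  ring

end

theorem first_brocard_on_tangent_circles
    (A B C aB bC cA Hp : EuclideanSpace ℝ (Fin 2))
    (hABC : AffineIndependent ℝ ![A, B, C])
    (a b c : ℝ) (ha : a = dist B C) (hb : b = dist C A) (hc : c = dist A B)
    (hHp : Hp = (a^2*b^2 + b^2*c^2 + c^2*a^2)⁻¹ •
      ((a^2*c^2) • A + (a^2*b^2) • B + (b^2*c^2) • C))
    (haB1 : dist aB A = dist aB B) (haB2 : ⟪aB - B, C - B⟫ = 0)
    (hbC1 : dist bC B = dist bC C) (hbC2 : ⟪bC - C, A - C⟫ = 0)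
    (hcA1 : dist cA C = dist cA A) (hcA2 : ⟪cA - A, B - A⟫ = 0) :
    dist aB Hp = dist aB B ∧ dist bC Hp = dist bC C ∧ dist cA Hp = dist cA A := by
  have hAB : A ≠ B := hABC.injective.ne (by decide : (0 : Fin 3) ≠ 1)
  have hBC : B ≠ C := hABC.injective.ne (by decide : (1 : Fin 3) ≠ 2)
  have hCA : C ≠ A := hABC.injective.ne (by decide : (2 : Fin 3) ≠ 0)
  have hHpB : Hp = (b^2*c^2 + c^2*a^2 + a^2*b^2)⁻¹ •
      ((b^2*a^2) • B + (b^2*c^2) • C + (c^2*a^2) • A) := by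
    rw [hHp]; module
  have hHpC : Hp = (c^2*a^2 + a^2*b^2 + b^2*c^2)⁻¹ •
      ((c^2*b^2) • C + (c^2*a^2) • A + (a^2*b^2) • B) := by
    rw [hHp]; module
  exact ⟨dist_brocard_eq_of_tangent_center ha hb hc hAB hHp haB1 haB2,
    dist_brocard_eq_of_tangent_center hb hc ha hBC hHpB hbC1 hbC2,
    dist_brocard_eq_of_tangent_center hc ha hb hCA hHpC hcA1 hcA2⟩
end

section
/- At the first Brocard point H+ the sides of triangle ABC subtend the angles ∠B H+ C = π − ∠ACB, ∠C H+ A = π − ∠BAC, and ∠A H+ B = π − ∠ABC. -/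
set_option maxHeartbeats 1000000
open EuclideanGeometry Real InnerProductGeometry

local notation "⟪" x ", " y "⟫" => @inner ℝ _ _ x y

lemma brocard_aux (A B C Hp : EuclideanSpace ℝ (Fin 2))
    (hAB : A ≠ B) (hBC : B ≠ C) (hCA : C ≠ A)
    (a b c : ℝ) (ha : a = dist B C) (hb : b = dist C A) (hc : c = dist A B)
    (hHp : Hp = (a^2*b^2 + b^2*c^2 + c^2*a^2)⁻¹ •
      ((a^2*c^2) • A + (a^2*b^2) • B + (b^2*c^2) • C)) :
    ∠ B Hp C = π - ∠ A C B := by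
  have ha0 : 0 < a := ha ▸ dist_pos.2 hBC
  have hb0 : 0 < b := hb ▸ dist_pos.2 hCA
  have hc0 : 0 < c := hc ▸ dist_pos.2 hAB
  set S : ℝ := a^2*b^2 + b^2*c^2 + c^2*a^2 with hSdef
  have hS0 : 0 < S := by positivity
  have hnu : ‖A - C‖ = b := by rw [hb, dist_eq_norm, norm_sub_rev]
  have hnv : ‖B - C‖ = a := by rw [ha, dist_eq_norm]
  have hiu : ⟪A - C, A - C⟫ = b^2 := by rw [real_inner_self_eq_norm_sq, hnu]
  have hiv : ⟪B - C, B - C⟫ = a^2 := by rw [real_inner_self_eq_norm_sq, hnv]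
  have huv : 2 * ⟪A - C, B - C⟫ = b^2 + a^2 - c^2 := by
    have h1 : ‖(A - C) - (B - C)‖ = c := by
      rw [hc, dist_eq_norm]; congr 1; abel
    have h2 := norm_sub_sq_real (A - C) (B - C)
    rw [h1, hnu, hnv] at h2
    linarith
  have hsymm : ⟪B - C, A - C⟫ = ⟪A - C, B - C⟫ := real_inner_comm _ _
  have hBH : S • (B - Hp) = (-(a^2*c^2)) • (A - C) + (c^2*(a^2+b^2)) • (B - C) := by
    rw [hHp]
    match_scalars <;> field_simp <;> ring
  have hCH : S • (C - Hp) = (-(a^2*c^2)) • (A - C) + (-(a^2*b^2)) • (B - C) := by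
    rw [hHp]
    match_scalars <;> field_simp <;> ring
  -- inner product and norms
  have key1 : S^2 * ⟪B - Hp, C - Hp⟫ = -(a^2*c^2*S) * ⟪A - C, B - C⟫ := by
    have e1 : S^2 * ⟪B - Hp, C - Hp⟫ = ⟪S • (B - Hp), S • (C - Hp)⟫ := by
      rw [real_inner_smul_left, real_inner_smul_right]; ring
    rw [e1, hBH, hCH]
    simp only [inner_add_left, inner_add_right, real_inner_smul_left, real_inner_smul_right]
    linear_combination (a^4*c^4) * hiu - (a^2*b^2*c^2*(a^2+b^2)) * hiv + (a^4*b^2*c^2) * huv - (a^2*b^2*c^4 + a^4*c^4) * hsymm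
  have key2 : S^2 * ‖B - Hp‖^2 = a^2*c^4*S := by
    have e1 : S^2 * ‖B - Hp‖^2 = ⟪S • (B - Hp), S • (B - Hp)⟫ := by
      rw [real_inner_smul_left, real_inner_smul_right, real_inner_self_eq_norm_sq]; ring
    rw [e1, hBH]
    simp only [inner_add_left, inner_add_right, real_inner_smul_left, real_inner_smul_right]
    linear_combination (a^4*c^4) * hiu + (c^4*(a^2+b^2)^2) * hiv - (a^2*c^4*(a^2+b^2)) * huv - (a^2*b^2*c^4 + a^4*c^4) * hsymm
  have key3 : S^2 * ‖C - Hp‖^2 = a^4*b^2*S := by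
    have e1 : S^2 * ‖C - Hp‖^2 = ⟪S • (C - Hp), S • (C - Hp)⟫ := by
      rw [real_inner_smul_left, real_inner_smul_right, real_inner_self_eq_norm_sq]; ring
    rw [e1, hCH]
    simp only [inner_add_left, inner_add_right, real_inner_smul_left, real_inner_smul_right]
    linear_combination (a^4*c^4) * hiu + (a^4*b^4) * hiv + (a^4*b^2*c^2) * huv + (a^4*b^2*c^2) * hsymm
  have hN : ‖B - Hp‖ * ‖C - Hp‖ = a^3*b*c^2 / S := by
    have hsq : (‖B - Hp‖ * ‖C - Hp‖)^2 = (a^3*b*c^2 / S)^2 := by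
      have h1 : ‖B - Hp‖^2 = a^2*c^4/S := by
        rw [eq_div_iff hS0.ne']; nlinarith [key2]
      have h2 : ‖C - Hp‖^2 = a^4*b^2/S := by
        rw [eq_div_iff hS0.ne']; nlinarith [key3]
      rw [mul_pow, h1, h2, div_pow]; field_simp
    have hpos1 : (0:ℝ) ≤ ‖B - Hp‖ * ‖C - Hp‖ := by positivity
    have hpos2 : (0:ℝ) ≤ a^3*b*c^2 / S := by positivity
    calc ‖B - Hp‖ * ‖C - Hp‖ = Real.sqrt ((‖B - Hp‖ * ‖C - Hp‖)^2) := (Real.sqrt_sq hpos1).symm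
      _ = Real.sqrt ((a^3*b*c^2 / S)^2) := by rw [hsq]
      _ = a^3*b*c^2 / S := Real.sqrt_sq hpos2
  have hP : ⟪B - Hp, C - Hp⟫ = -(a^2*c^2) * ⟪A - C, B - C⟫ / S := by
    rw [eq_div_iff hS0.ne']
    have := mul_left_cancel₀ (pow_ne_zero 2 hS0.ne')
      (show S^2 * (⟪B - Hp, C - Hp⟫ * S) = S^2 * (-(a^2*c^2) * ⟪A - C, B - C⟫) by
        linear_combination S * key1)
    linarith [this]
  have hratio : ⟪B - Hp, C - Hp⟫ / (‖B - Hp‖ * ‖C - Hp‖)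
      = -(⟪A - C, B - C⟫ / (‖A - C‖ * ‖B - C‖)) := by
    rw [hP, hN, hnu, hnv]
    field_simp
  simp only [EuclideanGeometry.angle, InnerProductGeometry.angle, vsub_eq_sub]
  rw [hratio, Real.arccos_neg]

theorem first_brocard_angles
    (A B C Hp : EuclideanSpace ℝ (Fin 2))
    (hABC : AffineIndependent ℝ ![A, B, C])
    (a b c : ℝ) (ha : a = dist B C) (hb : b = dist C A) (hc : c = dist A B)
    (hHp : Hp = (a^2*b^2 + b^2*c^2 + c^2*a^2)⁻¹ •
      ((a^2*c^2) • A + (a^2*b^2) • B + (b^2*c^2) • C)) :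
    ∠ B Hp C = π - ∠ A C B ∧ ∠ C Hp A = π - ∠ B A C ∧ ∠ A Hp B = π - ∠ A B C := by
  have hinj := hABC.injective
  have hAB : A ≠ B := by
    have := hinj.ne (show (0 : Fin 3) ≠ 1 by decide); simpa using this
  have hBC : B ≠ C := by
    have := hinj.ne (show (1 : Fin 3) ≠ 2 by decide); simpa using this
  have hCA : C ≠ A := by
    have := hinj.ne (show (2 : Fin 3) ≠ 0 by decide); simpa using this
  refine ⟨brocard_aux A B C Hp hAB hBC hCA a b c ha hb hc hHp,
    brocard_aux B C A Hp hBC hCA hAB b c a hb hc ha ?_, ?_⟩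
  · rw [hHp]; congr 1
    · congr 1; ring
    · module
  · have h3 := brocard_aux C A B Hp hCA hAB hBC c a b hc ha hb ?_
    · rw [h3, EuclideanGeometry.angle_comm]
    · rw [hHp]; congr 1
      · congr 1; ring
      · module
end

section
/- At the second Brocard point H− the sides of triangle ABC subtend the angles ∠B H− C = π − ∠ABC, ∠C H− A = π − ∠ACB, and ∠A H− B = π − ∠BAC. -/
open EuclideanGeometry Real

open scoped RealInnerProductSpace

set_option maxHeartbeats 1000000 in
private lemma brocard_key
    (A B C Hm : EuclideanSpace ℝ (Fin 2))
    (hAB : A ≠ B) (hBC : B ≠ C) (hCA : C ≠ A)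
    (a b c : ℝ) (ha : a = dist B C) (hb : b = dist C A) (hc : c = dist A B)
    (hHm : Hm = (a^2*b^2 + b^2*c^2 + c^2*a^2)⁻¹ •
      ((a^2*b^2) • A + (b^2*c^2) • B + (c^2*a^2) • C)) :
    ∠ B Hm C = π - ∠ A B C := by
  have ha0 : 0 < a := ha ▸ dist_pos.mpr hBC
  have hb0 : 0 < b := hb ▸ dist_pos.mpr hCA
  have hc0 : 0 < c := hc ▸ dist_pos.mpr hAB
  set P : EuclideanSpace ℝ (Fin 2) := A - B with hP
  set Q : EuclideanSpace ℝ (Fin 2) := C - B with hQ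
  have hnP : ‖P‖ = c := by rw [hc, dist_eq_norm, hP]
  have hnQ : ‖Q‖ = a := by rw [ha, dist_eq_norm, hQ, ← norm_neg]; congr 1; abel
  set s : ℝ := ⟪P, Q⟫ with hsdef
  have hQPs : ⟪Q, P⟫ = s := by rw [real_inner_comm, hsdef]
  have hb2 : b ^ 2 = a ^ 2 + c ^ 2 - 2 * s := by
    have hQP : ‖Q - P‖ = b := by
      rw [hb, dist_eq_norm, hQ, hP]; congr 1; abel
    have h5 := norm_sub_sq_real Q P
    rw [hQP, hnP, hnQ, hQPs] at h5
    linarith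
  have hs : s = (a ^ 2 + c ^ 2 - b ^ 2) / 2 := by linarith
  set D : ℝ := a^2*b^2 + b^2*c^2 + c^2*a^2 with hD
  have hD0 : 0 < D := by positivity
  set E : ℝ := b^2*(a^2+c^2) + a^2*c^2 with hE
  have hE0 : 0 < E := by positivity
  clear_value s D E
  have key_inner : ∀ x y z w : ℝ,
      ⟪x • P + y • Q, z • P + w • Q⟫ = x*z*c^2 + (x*w + y*z)*s + y*w*a^2 := by
    intro x y z w
    simp only [inner_add_left, inner_add_right, real_inner_smul_left,
      real_inner_smul_right, hQPs, ← hsdef,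
      real_inner_self_eq_norm_sq, hnP, hnQ]
    ring
  have hRu : D • (B - Hm) = (-(a^2*b^2)) • P + (-(c^2*a^2)) • Q := by
    rw [hHm, smul_sub, smul_inv_smul₀ hD0.ne', hP, hQ, hD]
    module
  have hRv : D • (C - Hm) = (-(a^2*b^2)) • P + (a^2*b^2 + b^2*c^2) • Q := by
    rw [hHm, smul_sub, smul_inv_smul₀ hD0.ne', hP, hQ, hD]
    module
  have hDuv : D^2 * ⟪B - Hm, C - Hm⟫ = -(a^2*b^2) * s * E := by
    have h1 : D^2 * ⟪B - Hm, C - Hm⟫ = ⟪D • (B - Hm), D • (C - Hm)⟫ := by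
      rw [real_inner_smul_left, real_inner_smul_right]; ring
    rw [h1, hRu, hRv, key_inner, hE, hs]; ring
  have hDu2 : D^2 * ‖B - Hm‖^2 = a^4*c^2 * E := by
    have h1 : D^2 * ‖B - Hm‖^2 = ⟪D • (B - Hm), D • (B - Hm)⟫ := by
      rw [real_inner_smul_left, real_inner_smul_right, real_inner_self_eq_norm_sq]; ring
    rw [h1, hRu, key_inner, hE, hs]; ring
  have hDv2 : D^2 * ‖C - Hm‖^2 = a^2*b^4 * E := by
    have h1 : D^2 * ‖C - Hm‖^2 = ⟪D • (C - Hm), D • (C - Hm)⟫ := by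
      rw [real_inner_smul_left, real_inner_smul_right, real_inner_self_eq_norm_sq]; ring
    rw [h1, hRv, key_inner, hE, hs]; ring
  set r : ℝ := Real.sqrt E with hr
  have hr0 : 0 < r := Real.sqrt_pos.mpr hE0
  have hr2 : r ^ 2 = E := Real.sq_sqrt hE0.le
  have hu_norm : ‖B - Hm‖ = a^2 * c * r / D := by
    have h2 : (D * ‖B - Hm‖) ^ 2 = (a^2 * c * r) ^ 2 := by
      rw [mul_pow, mul_pow, mul_pow, hr2]; nlinarith [hDu2]
    have h3 : D * ‖B - Hm‖ = a^2 * c * r :=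
      (pow_left_inj₀ (by positivity) (by positivity) two_ne_zero).mp h2
    field_simp
    linarith
  have hv_norm : ‖C - Hm‖ = a * b^2 * r / D := by
    have h2 : (D * ‖C - Hm‖) ^ 2 = (a * b^2 * r) ^ 2 := by
      rw [mul_pow, mul_pow, mul_pow, hr2]; nlinarith [hDv2]
    have h3 : D * ‖C - Hm‖ = a * b^2 * r :=
      (pow_left_inj₀ (by positivity) (by positivity) two_ne_zero).mp h2
    field_simp
    linarith
  have huv : ⟪B - Hm, C - Hm⟫ = -(a^2*b^2) * s * E / D^2 := by
    rw [eq_div_iff (pow_ne_zero 2 hD0.ne')]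
    linarith [hDuv]
  have hprod : ‖B - Hm‖ * ‖C - Hm‖ = a^3 * b^2 * c * E / D^2 := by
    rw [hu_norm, hv_norm, div_mul_div_comm,
      show a^2 * c * r * (a * b^2 * r) = a^3 * b^2 * c * r^2 from by ring, hr2,
      show D * D = D^2 from (sq D).symm]
  have hcos1 : Real.cos (∠ B Hm C) = -(s / (c * a)) := by
    rw [EuclideanGeometry.angle, InnerProductGeometry.cos_angle, vsub_eq_sub,
      vsub_eq_sub, huv, hprod]
    rw [div_div_div_cancel_right₀ (pow_ne_zero 2 hD0.ne')]
    have ha' : a ≠ 0 := ha0.ne'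
    have hb' : b ≠ 0 := hb0.ne'
    have hc' : c ≠ 0 := hc0.ne'
    have hE' : E ≠ 0 := hE0.ne'
    field_simp
  have hcos2 : Real.cos (∠ A B C) = s / (c * a) := by
    rw [EuclideanGeometry.angle, InnerProductGeometry.cos_angle, vsub_eq_sub,
      vsub_eq_sub, ← hP, ← hQ, ← hsdef, hnP, hnQ]
  have hcos : Real.cos (∠ B Hm C) = Real.cos (π - ∠ A B C) := by
    rw [Real.cos_pi_sub, hcos1, hcos2]
  exact Real.injOn_cos
    ⟨EuclideanGeometry.angle_nonneg _ _ _, EuclideanGeometry.angle_le_pi _ _ _⟩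
    ⟨by linarith [EuclideanGeometry.angle_le_pi A B C],
     by linarith [EuclideanGeometry.angle_nonneg A B C]⟩ hcos

theorem second_brocard_angles
    (A B C Hm : EuclideanSpace ℝ (Fin 2))
    (hABC : AffineIndependent ℝ ![A, B, C])
    (a b c : ℝ) (ha : a = dist B C) (hb : b = dist C A) (hc : c = dist A B)
    (hHm : Hm = (a^2*b^2 + b^2*c^2 + c^2*a^2)⁻¹ •
      ((a^2*b^2) • A + (b^2*c^2) • B + (c^2*a^2) • C)) :
    ∠ B Hm C = π - ∠ A B C ∧ ∠ C Hm A = π - ∠ A C B ∧ ∠ A Hm B = π - ∠ B A C := by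
  have hAB : A ≠ B := by
    have := hABC.injective.ne (show (0 : Fin 3) ≠ 1 by decide)
    simpa using this
  have hBC : B ≠ C := by
    have := hABC.injective.ne (show (1 : Fin 3) ≠ 2 by decide)
    simpa using this
  have hCA : C ≠ A := by
    have := hABC.injective.ne (show (2 : Fin 3) ≠ 0 by decide)
    simpa using this
  have hHm2 : Hm = (b^2*c^2 + c^2*a^2 + a^2*b^2)⁻¹ •
      ((b^2*c^2) • B + (c^2*a^2) • C + (a^2*b^2) • A) := by
    rw [hHm, show b^2*c^2 + c^2*a^2 + a^2*b^2 = a^2*b^2 + b^2*c^2 + c^2*a^2 from by ring]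
    module
  have hHm3 : Hm = (c^2*a^2 + a^2*b^2 + b^2*c^2)⁻¹ •
      ((c^2*a^2) • C + (a^2*b^2) • A + (b^2*c^2) • B) := by
    rw [hHm, show c^2*a^2 + a^2*b^2 + b^2*c^2 = a^2*b^2 + b^2*c^2 + c^2*a^2 from by ring]
    module
  refine ⟨brocard_key A B C Hm hAB hBC hCA a b c ha hb hc hHm, ?_, ?_⟩
  · rw [EuclideanGeometry.angle_comm A C B]
    exact brocard_key B C A Hm hBC hCA hAB b c a hb hc ha hHm2
  · rw [EuclideanGeometry.angle_comm B A C]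
    exact brocard_key C A B Hm hCA hAB hBC c a b hc ha hb hHm3
end

section
/- The point aH lies on the median from A (i.e., A, G, aH are collinear, where G is the centroid of ABC) and on the orthocentroidal circle with diameter GH, i.e., the inner product ⟪G − aH, H − aH⟫ = 0, where H is the orthocenter. -/
/-!
With `w = (B - A) + (C - A)`, twice the median vector from `A`, the side lengths give
`b² + c² - a² = 2⟪B - A, C - A⟫` and `2b² + 2c² - a² = ‖w‖² ≠ 0`, while the altitudes through
`B` and `C` give `⟪w, H - A⟫ = 2⟪B - A, C - A⟫`. Hence `aH = A + (⟪w, H - A⟫ / ‖w‖²) w` is the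
orthogonal projection of `H` onto the median `A + ℝ w`, which also contains `G = A + w / 3`;
so `aH` is on the median and `H - aH ⊥ G - aH`.
-/

open EuclideanGeometry RealInnerProductSpace

variable {V P : Type*} [NormedAddCommGroup V] [InnerProductSpace ℝ V] [MetricSpace P]
  [NormedAddTorsor V P]

theorem Affine.Triangle.inner_vsub_vsub_orthocenter_vsub_eq_zero (t : Triangle ℝ P)
    {i j k : Fin 3} (hj : j ≠ i) (hk : k ≠ i) :
    ⟪t.points j -ᵥ t.points k, t.orthocenter -ᵥ t.points i⟫ = 0 := by
  have hmem : t.orthocenter -ᵥ t.points i ∈ (t.altitude i).direction :=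
    AffineSubspace.vsub_mem_direction t.orthocenter_mem_altitude (t.mem_altitude i)
  rw [Simplex.direction_altitude] at hmem
  exact Submodule.inner_right_of_mem_orthogonal
    (vsub_mem_vectorSpan ℝ (Set.mem_image_of_mem _ hj) (Set.mem_image_of_mem _ hk))
    (Submodule.mem_inf.1 hmem).1

theorem Affine.Triangle.inner_vsub_add_vsub_orthocenter_vsub (t : Triangle ℝ P) :
    ⟪(t.points 1 -ᵥ t.points 0) + (t.points 2 -ᵥ t.points 0), t.orthocenter -ᵥ t.points 0⟫ =
      2 * ⟪t.points 1 -ᵥ t.points 0, t.points 2 -ᵥ t.points 0⟫ := by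
  have h₂ := t.inner_vsub_vsub_orthocenter_vsub_eq_zero (i := 2) (j := 1) (k := 0)
    (by decide) (by decide)
  have h₁ := t.inner_vsub_vsub_orthocenter_vsub_eq_zero (i := 1) (j := 2) (k := 0)
    (by decide) (by decide)
  have e₁ : ⟪t.points 1 -ᵥ t.points 0, t.orthocenter -ᵥ t.points 0⟫ =
      ⟪t.points 1 -ᵥ t.points 0, t.points 2 -ᵥ t.points 0⟫ := by
    rw [← vsub_add_vsub_cancel t.orthocenter (t.points 2), inner_add_right, h₂, zero_add]
  have e₂ : ⟪t.points 2 -ᵥ t.points 0, t.orthocenter -ᵥ t.points 0⟫ =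
      ⟪t.points 2 -ᵥ t.points 0, t.points 1 -ᵥ t.points 0⟫ := by
    rw [← vsub_add_vsub_cancel t.orthocenter (t.points 1), inner_add_right, h₁, zero_add]
  rw [inner_add_left, e₁, e₂, real_inner_comm (t.points 1 -ᵥ _)]
  ring

theorem two_mul_inner_vsub_vsub_eq_dist_sq (A B C : P) :
    2 * ⟪B -ᵥ A, C -ᵥ A⟫ = dist C A ^ 2 + dist A B ^ 2 - dist B C ^ 2 := by
  rw [dist_eq_norm_vsub' V A B, dist_eq_norm_vsub V C A, dist_eq_norm_vsub' V B C,
    ← vsub_sub_vsub_cancel_right C B A, norm_sub_sq_real, real_inner_comm]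
  ring

theorem norm_vsub_add_vsub_sq (A B C : P) :
    ‖(B -ᵥ A) + (C -ᵥ A)‖ ^ 2 = 2 * dist C A ^ 2 + 2 * dist A B ^ 2 - dist B C ^ 2 := by
  rw [norm_add_sq_real, two_mul_inner_vsub_vsub_eq_dist_sq, dist_eq_norm_vsub' V A B,
    dist_eq_norm_vsub V C A]
  ring

theorem vsub_add_vsub_ne_zero_of_affineIndependent {A B C : P}
    (h : AffineIndependent ℝ ![A, B, C]) : (B -ᵥ A) + (C -ᵥ A) ≠ 0 := by
  intro hw
  have hC : C = (-1 : ℝ) • (B -ᵥ A) +ᵥ A := by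
    rw [neg_one_smul, ← eq_neg_of_add_eq_zero_right hw, vsub_vadd]
  refine affineIndependent_iff_not_collinear_set.1 h
    (collinear_triple_of_mem_affineSpan_pair (left_mem_affineSpan_pair ℝ A B)
      (right_mem_affineSpan_pair ℝ A B) ?_)
  rw [hC]
  exact smul_vsub_vadd_mem_affineSpan_pair _ _ _

theorem collinear_smul_vadd_smul_vadd (p : P) (w : V) (s t : ℝ) :
    Collinear ℝ {p, s • w +ᵥ p, t • w +ᵥ p} := by
  have hline : ∀ r : ℝ, r • w +ᵥ p ∈ line[ℝ, p, w +ᵥ p] := fun r => by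
    simpa using smul_vsub_vadd_mem_affineSpan_pair r p (w +ᵥ p)
  exact collinear_triple_of_mem_affineSpan_pair (left_mem_affineSpan_pair ℝ _ _)
    (hline s) (hline t)

theorem inner_smul_sub_inner_div_norm_sq_smul_eq_zero (r : ℝ) (w h : V) :
    ⟪r • w, h - (⟪w, h⟫ / ‖w‖ ^ 2) • w⟫ = 0 := by
  rcases eq_or_ne w 0 with rfl | hw
  · simp
  rw [real_inner_smul_left, inner_sub_right, real_inner_smul_right,
    real_inner_self_eq_norm_sq, div_mul_cancel₀ _ (by positivity), sub_self, mul_zero]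

theorem aH_on_median_and_orthocentroidal_circle
    (A B C G H aH : EuclideanSpace ℝ (Fin 2))
    (hABC : AffineIndependent ℝ ![A, B, C])
    (a b c : ℝ) (ha : a = dist B C) (hb : b = dist C A) (hc : c = dist A B)
    (hG : G = (3 : ℝ)⁻¹ • (A + B + C))
    (hH : H = Affine.Triangle.orthocenter
      (⟨![A, B, C], hABC⟩ : Affine.Triangle ℝ (EuclideanSpace ℝ (Fin 2))))
    (haH : aH = (2*b^2 + 2*c^2 - a^2)⁻¹ •
      ((a^2) • A + (b^2 + c^2 - a^2) • B + (b^2 + c^2 - a^2) • C)) :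
    Collinear ℝ ({A, G, aH} : Set (EuclideanSpace ℝ (Fin 2))) ∧
      ⟪G - aH, H - aH⟫ = 0 := by
  set w := (B -ᵥ A) + (C -ᵥ A)
  have hw_sq : ‖w‖ ^ 2 = 2 * b ^ 2 + 2 * c ^ 2 - a ^ 2 := by
    rw [ha, hb, hc]
    exact norm_vsub_add_vsub_sq A B C
  have hw_H : ⟪w, H -ᵥ A⟫ = b ^ 2 + c ^ 2 - a ^ 2 := by
    rw [hH, ha, hb, hc, ← two_mul_inner_vsub_vsub_eq_dist_sq]
    exact Affine.Triangle.inner_vsub_add_vsub_orthocenter_vsub ⟨![A, B, C], hABC⟩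
  have hK : 2 * b ^ 2 + 2 * c ^ 2 - a ^ 2 ≠ 0 := by
    rw [← hw_sq]
    exact pow_ne_zero 2 (norm_ne_zero_iff.2 (vsub_add_vsub_ne_zero_of_affineIndependent hABC))
  have hG_eq : G = (3 : ℝ)⁻¹ • w +ᵥ A := by
    simp only [hG, w, vsub_eq_sub, vadd_eq_add]
    module
  have haH_eq : aH = (⟪w, H -ᵥ A⟫ / ‖w‖ ^ 2) • w +ᵥ A := by
    rw [haH, hw_H, hw_sq]
    simp only [w, vsub_eq_sub, vadd_eq_add]
    match_scalars
    · linear_combination mul_inv_cancel₀ hK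
    all_goals ring
  refine ⟨hG_eq ▸ haH_eq ▸ collinear_smul_vadd_smul_vadd A w _ _, ?_⟩
  rw [← vsub_eq_sub, ← vsub_eq_sub, hG_eq, haH_eq, vadd_vsub_vadd_cancel_right,
    vsub_vadd_eq_vsub_sub, ← sub_smul]
  exact inner_smul_sub_inner_div_norm_sq_smul_eq_zero _ _ _
end

section
/- The point aH lies on each of the three circles with centers aA, aB, aC: dist aA aH = dist aA B, dist aB aH = dist aB B, and dist aC aH = dist aC C. -/
/-!
Write `s = 2b² + 2c² - a²` and `k = b² + c² - a²`. Then
`aH - B = s⁻¹ • (a² • (A - B) + k • (C - B))`, where `s = 4 · AM²` (`M` the midpoint of `BC`,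
by Apollonius) is nonzero, and `‖aH - B‖² = a²c²/s`. Hence a circle centred at `X` through `B`
passes through `aH` iff `a² ⟪X - B, A - B⟫ + k ⟪X - B, C - B⟫ = a²c²/2`, a condition linear in
`X`. For `aB` the two inner products are `c²/2` and `0`; for `aA = B + C - O` (the foot of `O`
on `BC` is `M`) they are `(a² - b²)/2` and `a²/2`. The circle about `aC` is the case of `aB`
with `B` and `C` exchanged, which leaves `aH` unchanged.
-/

open EuclideanGeometry RealInnerProductSpace

section

open AffineSubspace

variable {V P : Type*} [NormedAddCommGroup V] [InnerProductSpace ℝ V] [MetricSpace P]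
  [NormedAddTorsor V P]

theorem EuclideanGeometry.reflection_affineSpan_pair_of_mem_perpBisector {B C p : P}
    (hp : p ∈ perpBisector B C) :
    reflection line[ℝ, B, C] p = Equiv.pointReflection (midpoint ℝ B C) p := by
  have hM : midpoint ℝ B C ∈ line[ℝ, B, C] := AffineMap.lineMap_mem_affineSpan_pair _ _ _
  have hperp : p -ᵥ midpoint ℝ B C ∈ (line[ℝ, B, C]).directionᗮ := by
    rw [direction_affineSpan, vectorSpan_pair_rev, ← direction_perpBisector]
    exact vsub_mem_direction hp (midpoint_mem_perpBisector B C)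
  rw [← vsub_vadd p (midpoint ℝ B C), reflection_orthogonal_vadd hM hperp,
    Equiv.pointReflection_apply, vsub_vadd, neg_vsub_eq_vsub_rev]

theorem AffineIndependent.ne_midpoint {A B C : P} (h : AffineIndependent ℝ ![A, B, C]) :
    A ≠ midpoint ℝ B C := fun hA =>
  affineIndependent_iff_not_collinear_set.mp h <| collinear_insert_of_mem_affineSpan_pair <|
    hA ▸ AffineMap.lineMap_mem_affineSpan_pair _ _ _

noncomputable def humptyPoint (A B C : V) : V :=
  (2 * dist C A ^ 2 + 2 * dist A B ^ 2 - dist B C ^ 2)⁻¹ •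
    (dist B C ^ 2 • A + (dist C A ^ 2 + dist A B ^ 2 - dist B C ^ 2) • B +
      (dist C A ^ 2 + dist A B ^ 2 - dist B C ^ 2) • C)

theorem humptyPoint_swap (A B C : V) : humptyPoint A C B = humptyPoint A B C := by
  simp only [humptyPoint, dist_comm C B, dist_comm A C, dist_comm B A]
  rw [add_right_comm (dist B C ^ 2 • A), add_comm (dist A B ^ 2) (dist C A ^ 2),
    add_comm (2 * dist A B ^ 2)]

theorem inner_sub_sub_eq_dist_sq (A B C : V) :
    ⟪A - B, C - B⟫ = (dist A B ^ 2 + dist B C ^ 2 - dist C A ^ 2) / 2 := by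
  have := norm_sub_sq_real (A - B) (C - B)
  rw [sub_sub_sub_cancel_right, ← dist_eq_norm, ← dist_eq_norm, ← dist_eq_norm,
    dist_comm C B] at this
  rw [dist_comm C A]
  linarith

theorem inner_sub_sub_of_dist_eq {X p q : V} (h : dist X p = dist X q) :
    ⟪X - q, p - q⟫ = dist q p ^ 2 / 2 :=
  mem_perpBisector_iff_inner_eq.mp (mem_perpBisector_iff_dist_eq.mpr h.symm)

/-- By Apollonius, the denominator is `4 * dist A (midpoint ℝ B C) ^ 2`. -/
theorem humptyPoint_denom_ne_zero {A B C : V} (hA : A ≠ midpoint ℝ B C) :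
    2 * dist C A ^ 2 + 2 * dist A B ^ 2 - dist B C ^ 2 ≠ 0 := by
  have := dist_sq_add_dist_sq_eq_two_mul_dist_midpoint_sq_add_half_dist_sq A B C
  have hM : 0 < dist A (midpoint ℝ B C) := dist_pos.mpr hA
  rw [dist_comm C A]
  nlinarith

theorem humptyPoint_sub_right {A B C : V} (hA : A ≠ midpoint ℝ B C) :
    humptyPoint A B C - B = (2 * dist C A ^ 2 + 2 * dist A B ^ 2 - dist B C ^ 2)⁻¹ •
      (dist B C ^ 2 • (A - B) + (dist C A ^ 2 + dist A B ^ 2 - dist B C ^ 2) • (C - B)) := by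
  calc humptyPoint A B C - B
      = (2 * dist C A ^ 2 + 2 * dist A B ^ 2 - dist B C ^ 2)⁻¹ •
          (dist B C ^ 2 • A + (dist C A ^ 2 + dist A B ^ 2 - dist B C ^ 2) • B +
            (dist C A ^ 2 + dist A B ^ 2 - dist B C ^ 2) • C -
            (2 * dist C A ^ 2 + 2 * dist A B ^ 2 - dist B C ^ 2) • B) := by
        rw [smul_sub, inv_smul_smul₀ (humptyPoint_denom_ne_zero hA), humptyPoint]
    _ = _ := by congr 1; module

theorem dist_humptyPoint_sq {A B C : V} (hA : A ≠ midpoint ℝ B C) :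
    dist B (humptyPoint A B C) ^ 2 =
      (2 * dist C A ^ 2 + 2 * dist A B ^ 2 - dist B C ^ 2)⁻¹ *
        (dist B C ^ 2 * dist A B ^ 2) := by
  have hs := humptyPoint_denom_ne_zero hA
  have hu : ‖A - B‖ = dist A B := (dist_eq_norm A B).symm
  have hv : ‖C - B‖ = dist B C := by rw [dist_comm, dist_eq_norm]
  rw [dist_comm, dist_eq_norm, humptyPoint_sub_right hA, norm_smul, mul_pow, norm_add_sq_real]
  simp only [norm_smul, real_inner_smul_left, real_inner_smul_right, inner_sub_sub_eq_dist_sq, hu,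
    hv, Real.norm_eq_abs, mul_pow, sq_abs, inv_pow]
  rw [sq (_ - _), mul_inv, mul_assoc, mul_right_inj' (inv_ne_zero hs),
    inv_mul_eq_iff_eq_mul₀ hs]
  ring

theorem dist_humptyPoint_eq_dist_iff {A B C : V} (hA : A ≠ midpoint ℝ B C) (X : V) :
    dist X (humptyPoint A B C) = dist X B ↔
      dist B C ^ 2 * ⟪X - B, A - B⟫ +
          (dist C A ^ 2 + dist A B ^ 2 - dist B C ^ 2) * ⟪X - B, C - B⟫ =
        dist B C ^ 2 * dist A B ^ 2 / 2 := by
  rw [eq_comm, ← mem_perpBisector_iff_dist_eq, mem_perpBisector_iff_inner_eq,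
    dist_humptyPoint_sq hA, vsub_eq_sub, vsub_eq_sub, humptyPoint_sub_right hA,
    real_inner_smul_right, inner_add_right, real_inner_smul_right, real_inner_smul_right,
    mul_div_assoc, mul_right_inj' (inv_ne_zero (humptyPoint_denom_ne_zero hA))]

theorem dist_humptyPoint_of_tangent {A B C X : V} (hA : A ≠ midpoint ℝ B C)
    (hXA : dist X A = dist X B) (hXB : ⟪X - B, C - B⟫ = 0) :
    dist X (humptyPoint A B C) = dist X B := by
  rw [dist_humptyPoint_eq_dist_iff hA, inner_sub_sub_of_dist_eq hXA, hXB, dist_comm B A]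
  ring

theorem dist_reflection_circumcenter_humptyPoint {A B C O : V} (hA : A ≠ midpoint ℝ B C)
    (hOA : dist O A = dist O B) (hOC : dist O C = dist O B) :
    dist (reflection line[ℝ, B, C] O) (humptyPoint A B C) =
      dist (reflection line[ℝ, B, C] O) B := by
  have hsub : reflection line[ℝ, B, C] O - B = C - O := by
    rw [reflection_affineSpan_pair_of_mem_perpBisector
        (mem_perpBisector_iff_dist_eq.mpr hOC.symm), Equiv.pointReflection_apply, vsub_eq_sub,
      vadd_eq_add]
    linear_combination (norm := module) midpoint_add_self ℝ B C
  rw [dist_humptyPoint_eq_dist_iff hA, hsub, ← sub_sub_sub_cancel_right C O B]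
  simp only [inner_sub_left (C - B) (O - B)]
  rw [inner_sub_sub_eq_dist_sq C B A, inner_sub_sub_of_dist_eq hOA,
    real_inner_self_eq_norm_sq, ← dist_eq_norm, inner_sub_sub_of_dist_eq hOC]
  simp only [dist_comm C B, dist_comm A C, dist_comm B A]
  ring

end

theorem aH_on_three_circles
    (A B C O aA aB aC aH : EuclideanSpace ℝ (Fin 2))
    (hABC : AffineIndependent ℝ ![A, B, C])
    (a b c : ℝ) (ha : a = dist B C) (hb : b = dist C A) (hc : c = dist A B)
    (hO : O = (⟨![A, B, C], hABC⟩ : Affine.Triangle ℝ (EuclideanSpace ℝ (Fin 2))).circumcenter)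
    (haA : aA = EuclideanGeometry.reflection (affineSpan ℝ {B, C}) O)
    (haB1 : dist aB A = dist aB B) (haB2 : ⟪aB - B, C - B⟫ = 0)
    (haC1 : dist aC A = dist aC C) (haC2 : ⟪aC - C, B - C⟫ = 0)
    (haH : aH = (2*b^2 + 2*c^2 - a^2)⁻¹ •
      ((a^2) • A + (b^2 + c^2 - a^2) • B + (b^2 + c^2 - a^2) • C)) :
    dist aA aH = dist aA B ∧ dist aB aH = dist aB B ∧ dist aC aH = dist aC C := by
  subst ha hb hc haA
  obtain rfl : aH = humptyPoint A B C := haH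
  have hA : A ≠ midpoint ℝ B C := hABC.ne_midpoint
  have hR := (⟨![A, B, C], hABC⟩ : Affine.Triangle ℝ _).dist_circumcenter_eq_circumradius'
  have hOA : dist O A = dist O B := by rw [hO]; exact (hR 0).trans (hR 1).symm
  have hOC : dist O C = dist O B := by rw [hO]; exact (hR 2).trans (hR 1).symm
  refine ⟨dist_reflection_circumcenter_humptyPoint hA hOA hOC,
    dist_humptyPoint_of_tangent hA haB1 haB2, ?_⟩
  rw [← humptyPoint_swap]
  exact dist_humptyPoint_of_tangent (midpoint_comm (R := ℝ) B C ▸ hA) haC1 haC2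
end

section
/- The distances from the vertices to the point aH satisfy (dist A aH)² = (b² + c² − a²)²/(2b² + 2c² − a²), (dist B aH)² = a²c²/(2b² + 2c² − a²), and (dist C aH)² = a²b²/(2b² + 2c² − a²). -/
open EuclideanGeometry

open scoped RealInnerProductSpace

theorem aH_vertex_distances
    (A B C aH : EuclideanSpace ℝ (Fin 2))
    (hABC : AffineIndependent ℝ ![A, B, C])
    (a b c : ℝ) (ha : a = dist B C) (hb : b = dist C A) (hc : c = dist A B)
    (haH : aH = (2*b^2 + 2*c^2 - a^2)⁻¹ •
      ((a^2) • A + (b^2 + c^2 - a^2) • B + (b^2 + c^2 - a^2) • C)) :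
    (dist A aH)^2 = (b^2 + c^2 - a^2)^2 / (2*b^2 + 2*c^2 - a^2) ∧
    (dist B aH)^2 = a^2 * c^2 / (2*b^2 + 2*c^2 - a^2) ∧
    (dist C aH)^2 = a^2 * b^2 / (2*b^2 + 2*c^2 - a^2) := by
  set u : EuclideanSpace ℝ (Fin 2) := B - A with hu
  set v : EuclideanSpace ℝ (Fin 2) := C - A with hv
  have hcomm := real_inner_comm u v
  have huu : ⟪u, u⟫ = c^2 := by
    rw [real_inner_self_eq_norm_sq, hu, ← dist_eq_norm, dist_comm, hc]
  have hvv : ⟪v, v⟫ = b^2 := by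
    rw [real_inner_self_eq_norm_sq, hv, ← dist_eq_norm, hb]
  have huv2 : ⟪u - v, u - v⟫ = a^2 := by
    have h : u - v = B - C := by rw [hu, hv]; abel
    rw [real_inner_self_eq_norm_sq, h, ← dist_eq_norm, ha]
  have huv : ⟪u, v⟫ = (b^2 + c^2 - a^2)/2 := by
    simp only [inner_sub_left, inner_sub_right] at huv2
    linarith
  have hs : 2*b^2 + 2*c^2 - a^2 ≠ 0 := by
    intro h
    have hsum : ⟪u + v, u + v⟫ = 0 := by
      simp only [inner_add_left, inner_add_right]
      linarith
    have huv0 : u + v = 0 := by rwa [inner_self_eq_zero] at hsum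
    have hveq : v = -u := eq_neg_of_add_eq_zero_right huv0
    have hcol : Collinear ℝ (Set.range ![A, B, C]) := by
      rw [collinear_iff_exists_forall_eq_smul_vadd]
      refine ⟨A, u, ?_⟩
      rintro p ⟨i, rfl⟩
      fin_cases i
      · exact ⟨0, by simp⟩
      · refine ⟨1, ?_⟩
        show B = (1:ℝ) • u +ᵥ A
        rw [one_smul, hu, vadd_eq_add]
        abel
      · refine ⟨-1, ?_⟩
        show C = (-1:ℝ) • u +ᵥ A
        have : C = v + A := by rw [hv]; abel
        rw [this, hveq, vadd_eq_add, neg_one_smul]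
    exact (affineIndependent_iff_not_collinear.mp hABC) hcol
  -- distances
  have key : ∀ (P : EuclideanSpace ℝ (Fin 2)) (w : EuclideanSpace ℝ (Fin 2)),
      (2*b^2 + 2*c^2 - a^2) • (aH - P) = w →
      ∀ t : ℝ, ⟪w, w⟫ = t * (2*b^2 + 2*c^2 - a^2) →
      dist P aH ^ 2 = t / (2*b^2 + 2*c^2 - a^2) := by
    intro P w hw t ht
    have h1 : ⟪(2*b^2 + 2*c^2 - a^2) • (aH - P), (2*b^2 + 2*c^2 - a^2) • (aH - P)⟫
        = (2*b^2 + 2*c^2 - a^2)^2 * dist P aH ^ 2 := by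
      rw [real_inner_smul_left, real_inner_smul_right, real_inner_self_eq_norm_sq,
        ← dist_eq_norm, dist_comm]
      ring
    rw [hw, ht] at h1
    rw [eq_div_iff hs]
    have := mul_right_cancel₀ hs (show (dist P aH ^ 2 * (2*b^2 + 2*c^2 - a^2)) *
      (2*b^2 + 2*c^2 - a^2) = t * (2*b^2 + 2*c^2 - a^2) by linear_combination -h1)
    exact this
  refine ⟨?_, ?_, ?_⟩
  · apply key A ((b^2+c^2-a^2) • u + (b^2+c^2-a^2) • v) ?_ _ ?_
    · rw [haH, smul_sub, smul_smul, mul_inv_cancel₀ hs, one_smul, hu, hv]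
      module
    · simp only [inner_add_left, inner_add_right, real_inner_smul_left, real_inner_smul_right,
        huu, hvv, huv, hcomm]
      ring
  · apply key B ((a^2) • (-u) + (b^2+c^2-a^2) • (v - u)) ?_ _ ?_
    · rw [haH, smul_sub, smul_smul, mul_inv_cancel₀ hs, one_smul, hu, hv]
      module
    · simp only [inner_add_left, inner_add_right, inner_sub_left, inner_sub_right,
        inner_neg_left, inner_neg_right, real_inner_smul_left, real_inner_smul_right,
        huu, hvv, huv, hcomm]
      ring
  · apply key C ((a^2) • (-v) + (b^2+c^2-a^2) • (u - v)) ?_ _ ?_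
    · rw [haH, smul_sub, smul_smul, mul_inv_cancel₀ hs, one_smul, hu, hv]
      module
    · simp only [inner_add_left, inner_add_right, inner_sub_left, inner_sub_right,
        inner_neg_left, inner_neg_right, real_inner_smul_left, real_inner_smul_right,
        huu, hvv, huv, hcomm]
      ring
end

section
/- The distances from the vertices to the first Brocard point H+ satisfy (dist A H+)² = b⁴c²/(a²b² + b²c² + c²a²), (dist B H+)² = c⁴a²/(a²b² + b²c² + c²a²), and (dist C H+)² = a⁴b²/(a²b² + b²c² + c²a²). -/
/-!
The first Brocard point is invariant under the cyclic relabelling `A → B → C → A`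
(with `a → b → c → a`), so it suffices to compute `dist A H₊`. For a point with
barycentric weights `(x, y, z)` the vector from `A` is `(y • (B - A) + z • (C - A)) / (x + y + z)`,
whose squared length is determined by the side lengths through the law of cosines;
with the Brocard weights the numerator factors as `b⁴ c² (x + y + z)`.
-/

section WeightedCombination

variable {V : Type*} [NormedAddCommGroup V] [InnerProductSpace ℝ V]

theorem norm_smul_add_smul_sq (u v : V) (y z : ℝ) :
    ‖y • u + z • v‖ ^ 2 =
      y ^ 2 * ‖u‖ ^ 2 + z ^ 2 * ‖v‖ ^ 2 + y * z * (‖u‖ ^ 2 + ‖v‖ ^ 2 - ‖u - v‖ ^ 2) := by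
  rw [norm_add_sq_real, norm_sub_sq_real, norm_smul, norm_smul, real_inner_smul_left,
    real_inner_smul_right, mul_pow, mul_pow, Real.norm_eq_abs, Real.norm_eq_abs, sq_abs,
    sq_abs]
  ring

theorem dist_sq_weighted_combination (A B C : V) {x y z : ℝ} (hs : x + y + z ≠ 0) :
    dist A ((x + y + z)⁻¹ • (x • A + y • B + z • C)) ^ 2 =
      (y ^ 2 * dist A B ^ 2 + z ^ 2 * dist A C ^ 2 +
        y * z * (dist A B ^ 2 + dist A C ^ 2 - dist B C ^ 2)) / (x + y + z) ^ 2 := by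
  have hvec : (x + y + z)⁻¹ • (x • A + y • B + z • C) - A =
      (x + y + z)⁻¹ • (y • (B - A) + z • (C - A)) := by
    rw [eq_inv_smul_iff₀ hs, smul_sub, smul_inv_smul₀ hs]
    module
  rw [dist_comm, dist_eq_norm, hvec, norm_smul, mul_pow, norm_smul_add_smul_sq,
    dist_comm A B, dist_comm A C, dist_eq_norm, dist_eq_norm, dist_eq_norm,
    show B - A - (C - A) = B - C by abel, Real.norm_eq_abs, sq_abs, inv_pow, div_eq_inv_mul]

theorem dist_sq_first_brocard_left (A B C : V) {a b c : ℝ}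
    (ha : a = dist B C) (hb : b = dist C A) (hc : c = dist A B)
    (hs : a ^ 2 * b ^ 2 + b ^ 2 * c ^ 2 + c ^ 2 * a ^ 2 ≠ 0) :
    dist A ((a ^ 2 * b ^ 2 + b ^ 2 * c ^ 2 + c ^ 2 * a ^ 2)⁻¹ •
        ((a ^ 2 * c ^ 2) • A + (a ^ 2 * b ^ 2) • B + (b ^ 2 * c ^ 2) • C)) ^ 2 =
      b ^ 4 * c ^ 2 / (a ^ 2 * b ^ 2 + b ^ 2 * c ^ 2 + c ^ 2 * a ^ 2) := by
  have hweights : a ^ 2 * b ^ 2 + b ^ 2 * c ^ 2 + c ^ 2 * a ^ 2 =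
      a ^ 2 * c ^ 2 + a ^ 2 * b ^ 2 + b ^ 2 * c ^ 2 := by ring
  rw [hweights] at hs ⊢
  rw [dist_sq_weighted_combination A B C hs, ← hc, dist_comm A C, ← hb, ← ha,
    div_eq_div_iff (pow_ne_zero 2 hs) hs]
  ring

end WeightedCombination

theorem first_brocard_vertex_distances
    (A B C Hp : EuclideanSpace ℝ (Fin 2))
    (hABC : AffineIndependent ℝ ![A, B, C])
    (a b c : ℝ) (ha : a = dist B C) (hb : b = dist C A) (hc : c = dist A B)
    (hHp : Hp = (a^2*b^2 + b^2*c^2 + c^2*a^2)⁻¹ •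
      ((a^2*c^2) • A + (a^2*b^2) • B + (b^2*c^2) • C)) :
    (dist A Hp)^2 = b^4 * c^2 / (a^2*b^2 + b^2*c^2 + c^2*a^2) ∧
    (dist B Hp)^2 = c^4 * a^2 / (a^2*b^2 + b^2*c^2 + c^2*a^2) ∧
    (dist C Hp)^2 = a^4 * b^2 / (a^2*b^2 + b^2*c^2 + c^2*a^2) := by
  have hb0 : 0 < b := hb ▸ dist_pos.2 fun h ↦ hABC.injective.ne (by decide : (2 : Fin 3) ≠ 0) h
  have hc0 : 0 < c := hc ▸ dist_pos.2 fun h ↦ hABC.injective.ne (by decide : (0 : Fin 3) ≠ 1) h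
  have hs : a ^ 2 * b ^ 2 + b ^ 2 * c ^ 2 + c ^ 2 * a ^ 2 ≠ 0 := by positivity
  have hsB : b ^ 2 * c ^ 2 + c ^ 2 * a ^ 2 + a ^ 2 * b ^ 2 ≠ 0 := by positivity
  have hsC : c ^ 2 * a ^ 2 + a ^ 2 * b ^ 2 + b ^ 2 * c ^ 2 ≠ 0 := by positivity
  have hHpB : Hp = (b^2*c^2 + c^2*a^2 + a^2*b^2)⁻¹ •
      ((b^2*a^2) • B + (b^2*c^2) • C + (c^2*a^2) • A) := by
    rw [hHp]; congr 1 <;> [ring; module]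
  have hHpC : Hp = (c^2*a^2 + a^2*b^2 + b^2*c^2)⁻¹ •
      ((c^2*b^2) • C + (c^2*a^2) • A + (a^2*b^2) • B) := by
    rw [hHp]; congr 1 <;> [ring; module]
  refine ⟨hHp ▸ dist_sq_first_brocard_left A B C ha hb hc hs, ?_, ?_⟩
  · rw [hHpB, dist_sq_first_brocard_left B C A hb hc ha hsB]; ring
  · rw [hHpC, dist_sq_first_brocard_left C A B hc ha hb hsC]; ring
end

section
/- The distances from the vertices to the second Brocard point H− satisfy (dist A H−)² = b²c⁴/(a²b² + b²c² + c²a²), (dist B H−)² = c²a⁴/(a²b² + b²c² + c²a²), and (dist C H−)² = a²b⁴/(a²b² + b²c² + c²a²). -/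
/-!
For weights `u, v, w` with sum `s`, the point `P = s⁻¹ • (u • A + v • B + w • C)` satisfies
`A - P = s⁻¹ • (v • (A - B) + w • (A - C))`. Expanding the square with
`2 ⟪A - B, A - C⟫ = b² + c² - a²` gives `s² · AP² = s (v c² + w b²) - (v w a² + w u b² + u v c²)`.
For the Brocard weights `(a²b², b²c², c²a²)` the subtracted term is `a²b²c² s` and
`v c² + w b² = b²c² (c² + a²)`, leaving `s · AP² = b²c⁴`. The other two vertices follow by
rotating the triangle.
-/

open EuclideanGeometry

section

variable {V : Type*} [NormedAddCommGroup V] [InnerProductSpace ℝ V]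

theorem dist_smul_add_smul_add_smul_sq_mul (A B C : V) {u v w : ℝ} (hs : u + v + w ≠ 0) :
    dist A ((u + v + w)⁻¹ • (u • A + v • B + w • C)) ^ 2 * (u + v + w) ^ 2 =
      (u + v + w) * (v * dist A B ^ 2 + w * dist C A ^ 2) -
        (v * w * dist B C ^ 2 + w * u * dist C A ^ 2 + u * v * dist A B ^ 2) := by
  have hsub : A - (u + v + w)⁻¹ • (u • A + v • B + w • C) =
      (u + v + w)⁻¹ • (v • (A - B) + w • (A - C)) := by
    match_scalars <;> field_simp
    ring
  have hinner : 2 * inner ℝ (A - B) (A - C) = dist A B ^ 2 + dist A C ^ 2 - dist B C ^ 2 := by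
    rw [real_inner_eq_norm_mul_self_add_norm_mul_self_sub_norm_sub_mul_self_div_two,
      sub_sub_sub_cancel_left, dist_eq_norm A B, dist_eq_norm A C, dist_eq_norm' B C]
    ring
  rw [dist_comm C A, dist_eq_norm, hsub, norm_smul, mul_pow, norm_add_sq_real, norm_smul,
    norm_smul, real_inner_smul_left, real_inner_smul_right, ← dist_eq_norm, ← dist_eq_norm]
  simp only [Real.norm_eq_abs, mul_pow, sq_abs]
  field_simp
  linear_combination (v * w) * hinner

theorem dist_sq_of_eq_secondBrocard (A B C P : V) {a b c : ℝ}
    (ha : a = dist B C) (hb : b = dist C A) (hc : c = dist A B)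
    (hs : a^2*b^2 + b^2*c^2 + c^2*a^2 ≠ 0)
    (hP : P = (a^2*b^2 + b^2*c^2 + c^2*a^2)⁻¹ •
      ((a^2*b^2) • A + (b^2*c^2) • B + (c^2*a^2) • C)) :
    dist A P ^ 2 = b^2 * c^4 / (a^2*b^2 + b^2*c^2 + c^2*a^2) := by
  have h := dist_smul_add_smul_add_smul_sq_mul A B C hs
  rw [← hP, ← ha, ← hb, ← hc] at h
  rw [eq_div_iff hs]
  apply mul_right_cancel₀ hs
  linear_combination h

end

theorem second_brocard_vertex_distances
    (A B C Hm : EuclideanSpace ℝ (Fin 2))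
    (hABC : AffineIndependent ℝ ![A, B, C])
    (a b c : ℝ) (ha : a = dist B C) (hb : b = dist C A) (hc : c = dist A B)
    (hHm : Hm = (a^2*b^2 + b^2*c^2 + c^2*a^2)⁻¹ •
      ((a^2*b^2) • A + (b^2*c^2) • B + (c^2*a^2) • C)) :
    (dist A Hm)^2 = b^2 * c^4 / (a^2*b^2 + b^2*c^2 + c^2*a^2) ∧
    (dist B Hm)^2 = c^2 * a^4 / (a^2*b^2 + b^2*c^2 + c^2*a^2) ∧
    (dist C Hm)^2 = a^2 * b^4 / (a^2*b^2 + b^2*c^2 + c^2*a^2) := by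
  have ha0 : 0 < a := ha ▸ dist_pos.2 (hABC.injective.ne (by decide : (1 : Fin 3) ≠ 2))
  have hb0 : 0 < b := hb ▸ dist_pos.2 (hABC.injective.ne (by decide : (2 : Fin 3) ≠ 0))
  have hc0 : 0 < c := hc ▸ dist_pos.2 (hABC.injective.ne (by decide : (0 : Fin 3) ≠ 1))
  have hs : a^2*b^2 + b^2*c^2 + c^2*a^2 ≠ 0 := by positivity
  refine ⟨dist_sq_of_eq_secondBrocard A B C Hm ha hb hc hs hHm, ?_, ?_⟩
  · have h := dist_sq_of_eq_secondBrocard B C A Hm hb hc ha (by rwa [add_rotate] at hs)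
      (by rw [hHm, add_rotate (a^2*b^2), add_rotate ((a^2*b^2) • A)])
    rwa [← add_rotate] at h
  · have h := dist_sq_of_eq_secondBrocard C A B Hm hc ha hb (by rwa [← add_rotate] at hs)
      (by rw [hHm, add_rotate (c^2*a^2), add_rotate ((c^2*a^2) • C)])
    rwa [add_rotate] at h
end

section
/- Let l = a²(2b² + 2c² − a²)/Δ, where Δ = (a+b+c)(b+c−a)(c+a−b)(a+b−c). Then (dist aB aC)² = l·a², (dist aC aA)² = l·b², and (dist aA aB)² = l·c²; hence triangle aA aB aC is similar to triangle ABC. -/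
/-!
Take `B` as origin and `u = A - B`, `w = C - B` as reference vectors. Each of the points `aB`,
`aC`, `O` and `aA = B + C - O` is cut out by two linear conditions, so its inner products with
`u` and `w` are explicit in `a, b, c`. In the plane the Gram determinant of `u, w, d` vanishes,
which gives `‖d‖²` as a quadratic form in `⟪d, u⟫` and `⟪d, w⟫` divided by the Gram determinant
of `u, w`, that is by `Δ / 4`. Evaluated on the differences of the four points, this quadratic
form turns out to be proportional to the squared sides.
-/

open EuclideanGeometry RealInnerProductSpace

section Affine

variable {V P : Type*} [NormedAddCommGroup V] [InnerProductSpace ℝ V] [MetricSpace P]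
  [NormedAddTorsor V P]

theorem reflection_affineSpan_pair_of_dist_eq {p₁ p₂ p : P} (h : dist p p₁ = dist p p₂) :
    reflection line[ℝ, p₁, p₂] p = Equiv.pointReflection (midpoint ℝ p₁ p₂) p := by
  have hproj : (orthogonalProjection line[ℝ, p₁, p₂] p : P) = midpoint ℝ p₁ p₂ := by
    refine coe_orthogonalProjection_eq_iff_mem.mpr ⟨AffineMap.lineMap_mem_affineSpan_pair _ _ _, ?_⟩
    rw [direction_affineSpan, vectorSpan_pair_rev,
      Submodule.mem_orthogonal_singleton_iff_inner_right]
    exact AffineSubspace.mem_perpBisector_iff_inner_eq_zero'.mp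
      (AffineSubspace.mem_perpBisector_iff_dist_eq.mpr h)
  rw [reflection_apply', hproj, Equiv.pointReflection_apply]

theorem inner_vsub_vsub_eq_dist_sq (p₁ p₂ p₃ : P) :
    ⟪p₁ -ᵥ p₂, p₃ -ᵥ p₂⟫ = (dist p₁ p₂ ^ 2 + dist p₃ p₂ ^ 2 - dist p₁ p₃ ^ 2) / 2 := by
  rw [real_inner_eq_norm_mul_self_add_norm_mul_self_sub_norm_sub_mul_self_div_two,
    vsub_sub_vsub_cancel_right, dist_eq_norm_vsub V, dist_eq_norm_vsub V, dist_eq_norm_vsub V]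
  ring

theorem sq_norm_mul_sq_norm_sub_sq_inner_pos_of_not_collinear {p₁ p₂ p₃ : P}
    (h : ¬Collinear ℝ {p₁, p₂, p₃}) :
    0 < ‖p₁ -ᵥ p₂‖ ^ 2 * ‖p₃ -ᵥ p₂‖ ^ 2 - ⟪p₁ -ᵥ p₂, p₃ -ᵥ p₂⟫ ^ 2 := by
  have h₁₂ : 0 < ‖p₁ -ᵥ p₂‖ := by simpa using ne₁₂_of_not_collinear h
  have h₃₂ : 0 < ‖p₃ -ᵥ p₂‖ := by simpa using (ne₂₃_of_not_collinear h).symm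
  have hsin := mul_pos (sin_pos_of_not_collinear h) (mul_pos h₁₂ h₃₂)
  rw [angle, InnerProductGeometry.sin_angle_mul_norm_mul_norm, Real.sqrt_pos,
    real_inner_self_eq_norm_sq, real_inner_self_eq_norm_sq] at hsin
  linarith

theorem heron_pos_of_not_collinear {p₁ p₂ p₃ : P} {a b c : ℝ} (h : ¬Collinear ℝ {p₁, p₂, p₃})
    (ha : dist p₂ p₃ = a) (hb : dist p₃ p₁ = b) (hc : dist p₁ p₂ = c) :
    0 < (a + b + c) * (b + c - a) * (c + a - b) * (a + b - c) := by
  have hgram := sq_norm_mul_sq_norm_sub_sq_inner_pos_of_not_collinear h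
  rw [inner_vsub_vsub_eq_dist_sq, ← dist_eq_norm_vsub, ← dist_eq_norm_vsub, dist_comm p₃ p₂,
    dist_comm p₁ p₃, ha, hb, hc] at hgram
  -- `Δ` is sixteen times the squared area, the Gram determinant four times.
  linarith [show (a + b + c) * (b + c - a) * (c + a - b) * (a + b - c) =
    4 * (c ^ 2 * a ^ 2 - ((c ^ 2 + a ^ 2 - b ^ 2) / 2) ^ 2) by ring]

end Affine

section InnerProductSpace

variable {V : Type*} [NormedAddCommGroup V] [InnerProductSpace ℝ V]

theorem reflection_affineSpan_pair_eq_add_sub_of_dist_eq {p x y : V} (h : dist p x = dist p y) :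
    reflection line[ℝ, x, y] p = x + y - p := by
  rw [reflection_affineSpan_pair_of_dist_eq h, Equiv.pointReflection_apply, vsub_eq_sub,
    vadd_eq_add, sub_add_eq_add_sub, midpoint_add_self]

theorem inner_sub_sub_eq_of_dist_eq {p x y z : V} (h : dist p x = dist p y) :
    ⟪p - z, x - z⟫ = ⟪p - z, y - z⟫ + (dist x z ^ 2 - dist y z ^ 2) / 2 := by
  rw [dist_eq_norm, dist_eq_norm, ← sub_sub_sub_cancel_right p x z,
    ← sub_sub_sub_cancel_right p y z] at h
  have h₂ := congrArg (· ^ 2) h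
  rw [norm_sub_sq_real (p - z), norm_sub_sq_real (p - z)] at h₂
  rw [dist_eq_norm, dist_eq_norm]
  linarith

theorem inner_sub_sub_eq_of_dist_eq_of_inner_eq_zero {p x y z : V} (h₁ : dist p x = dist p y)
    (h₂ : ⟪p - y, z - y⟫ = 0) :
    ⟪p - z, x - z⟫ = (dist x z ^ 2 + dist y z ^ 2) / 2 ∧ ⟪p - z, y - z⟫ = dist y z ^ 2 := by
  have hy : ⟪p - z, y - z⟫ = dist y z ^ 2 :=
    inner_vsub_vsub_right_eq_dist_sq_right_iff (a := p) (b := y) (c := z) |>.mpr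
      (inner_vsub_right_eq_zero_symm.mp h₂)
  refine ⟨?_, hy⟩
  rw [inner_sub_sub_eq_of_dist_eq h₁, hy]
  ring

theorem sq_norm_mul_gram_eq_of_finrank_eq_two (hV : Module.finrank ℝ V = 2) (u w d : V) :
    ‖d‖ ^ 2 * (‖u‖ ^ 2 * ‖w‖ ^ 2 - ⟪u, w⟫ ^ 2) =
      ⟪d, u⟫ ^ 2 * ‖w‖ ^ 2 - 2 * ⟪d, u⟫ * ⟪d, w⟫ * ⟪u, w⟫ + ⟪d, w⟫ ^ 2 * ‖u‖ ^ 2 := by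
  have : FiniteDimensional ℝ V := .of_finrank_eq_succ hV
  let e := ((stdOrthonormalBasis ℝ V).reindex (finCongr hV)).repr
  have inner_eq (x y : V) : ⟪x, y⟫ = e x 0 * e y 0 + e x 1 * e y 1 := by
    rw [← e.inner_map_map, PiLp.inner_apply, Fin.sum_univ_two]
    simp [mul_comm]
  simp only [← real_inner_self_eq_norm_sq, inner_eq]
  ring

theorem dist_sq_mul_heron_eq_of_inner_eq (hV : Module.finrank ℝ V = 2) {A B C p q : V}
    {a b c α β α' β' : ℝ} (ha : dist B C = a) (hb : dist C A = b) (hc : dist A B = c)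
    (hp : ⟪p - B, A - B⟫ = α ∧ ⟪p - B, C - B⟫ = β)
    (hq : ⟪q - B, A - B⟫ = α' ∧ ⟪q - B, C - B⟫ = β') :
    dist p q ^ 2 * ((a + b + c) * (b + c - a) * (c + a - b) * (a + b - c)) =
      4 * ((α - α') ^ 2 * a ^ 2 - (α - α') * (β - β') * (c ^ 2 + a ^ 2 - b ^ 2)
        + (β - β') ^ 2 * c ^ 2) := by
  have hgram := sq_norm_mul_gram_eq_of_finrank_eq_two hV (A - B) (C - B) (p - q)
  rw [← sub_sub_sub_cancel_right p q B, inner_sub_left (p - B), inner_sub_left (p - B), hp.1,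
    hp.2, hq.1, hq.2, sub_sub_sub_cancel_right, ← dist_eq_norm, ← dist_eq_norm, ← dist_eq_norm,
    ← vsub_eq_sub A B, ← vsub_eq_sub C B, inner_vsub_vsub_eq_dist_sq, dist_comm C B,
    dist_comm A C, ha, hb, hc] at hgram
  linear_combination 4 * hgram

theorem Real.eq_sqrt_mul_of_sq_eq_mul_sq {x y l : ℝ} (hx : 0 ≤ x) (hy : 0 ≤ y)
    (h : x ^ 2 = l * y ^ 2) : x = √l * y := by
  rw [← Real.sqrt_sq hx, h, Real.sqrt_mul' _ (sq_nonneg y), Real.sqrt_sq hy]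

theorem triangle_aA_aB_aC_similar
    (A B C O aA aB aC : EuclideanSpace ℝ (Fin 2))
    (hABC : AffineIndependent ℝ ![A, B, C])
    (a b c : ℝ) (ha : a = dist B C) (hb : b = dist C A) (hc : c = dist A B)
    (hO : O = (⟨![A, B, C], hABC⟩ : Affine.Triangle ℝ (EuclideanSpace ℝ (Fin 2))).circumcenter)
    (haA : aA = EuclideanGeometry.reflection (affineSpan ℝ {B, C}) O)
    (haB1 : dist aB A = dist aB B) (haB2 : ⟪aB - B, C - B⟫ = 0)
    (haC1 : dist aC A = dist aC C) (haC2 : ⟪aC - C, B - C⟫ = 0)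
    (l : ℝ)
    (hl : l = a^2 * (2*b^2 + 2*c^2 - a^2) / ((a+b+c)*(b+c-a)*(c+a-b)*(a+b-c))) :
    ((dist aB aC)^2 = l * a^2 ∧ (dist aC aA)^2 = l * b^2 ∧ (dist aA aB)^2 = l * c^2) ∧
    ∃ r : ℝ, 0 < r ∧ dist aB aC = r * dist B C ∧ dist aC aA = r * dist C A ∧
      dist aA aB = r * dist A B := by
  have hΔ := heron_pos_of_not_collinear (affineIndependent_iff_not_collinear_set.mp hABC)
    ha.symm hb.symm hc.symm
  have hOA : dist O A = dist O B := by
    rw [hO]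
    exact (Affine.Simplex.dist_circumcenter_eq_circumradius' _ 0).trans
      (Affine.Simplex.dist_circumcenter_eq_circumradius' _ 1).symm
  have hOC : dist O B = dist O C := by
    rw [hO]
    exact (Affine.Simplex.dist_circumcenter_eq_circumradius' _ 1).trans
      (Affine.Simplex.dist_circumcenter_eq_circumradius' _ 2).symm
  have cB : ⟪aB - B, A - B⟫ = c ^ 2 / 2 ∧ ⟪aB - B, C - B⟫ = 0 :=
    ⟨by simpa [← hc] using inner_sub_sub_eq_of_dist_eq (z := B) haB1, haB2⟩
  have cC : ⟪aC - B, A - B⟫ = (c ^ 2 + a ^ 2) / 2 ∧ ⟪aC - B, C - B⟫ = a ^ 2 := by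
    simpa [← hc, dist_comm C B, ← ha] using inner_sub_sub_eq_of_dist_eq_of_inner_eq_zero haC1 haC2
  have cO : ⟪O - B, A - B⟫ = c ^ 2 / 2 ∧ ⟪O - B, C - B⟫ = a ^ 2 / 2 :=
    ⟨by simpa [← hc] using inner_sub_sub_eq_of_dist_eq (z := B) hOA,
      by simpa [dist_comm C B, ← ha] using inner_sub_sub_eq_of_dist_eq (z := B) hOC.symm⟩
  have cA : ⟪aA - B, A - B⟫ = (a ^ 2 - b ^ 2) / 2 ∧ ⟪aA - B, C - B⟫ = a ^ 2 / 2 := by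
    have haA' : aA - B = (C - B) - (O - B) := by
      rw [haA, reflection_affineSpan_pair_eq_add_sub_of_dist_eq hOC]
      abel
    rw [haA', inner_sub_left (C - B), inner_sub_left (C - B), cO.1, cO.2,
      real_inner_self_eq_norm_sq, ← dist_eq_norm, ← vsub_eq_sub C B, ← vsub_eq_sub A B,
      inner_vsub_vsub_eq_dist_sq, dist_comm C B, ← ha, ← hb, ← hc]
    constructor <;> ring
  have hl_eq {p q : EuclideanSpace ℝ (Fin 2)} {s : ℝ} :
      dist p q ^ 2 = l * s ^ 2 ↔ dist p q ^ 2 * ((a+b+c)*(b+c-a)*(c+a-b)*(a+b-c)) =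
        a ^ 2 * (2 * b ^ 2 + 2 * c ^ 2 - a ^ 2) * s ^ 2 := by
    rw [hl, div_mul_eq_mul_div, eq_div_iff hΔ.ne']
  have hV : Module.finrank ℝ (EuclideanSpace ℝ (Fin 2)) = 2 := finrank_euclideanSpace_fin
  have h₁ : dist aB aC ^ 2 = l * a ^ 2 := hl_eq.mpr <| by
    rw [dist_sq_mul_heron_eq_of_inner_eq hV ha.symm hb.symm hc.symm cB cC]; ring
  have h₂ : dist aC aA ^ 2 = l * b ^ 2 := hl_eq.mpr <| by
    rw [dist_sq_mul_heron_eq_of_inner_eq hV ha.symm hb.symm hc.symm cC cA]; ring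
  have h₃ : dist aA aB ^ 2 = l * c ^ 2 := hl_eq.mpr <| by
    rw [dist_sq_mul_heron_eq_of_inner_eq hV ha.symm hb.symm hc.symm cA cB]; ring
  have hl_pos : 0 < l := by
    rw [hl]
    refine div_pos ?_ hΔ
    linarith [sq_nonneg (b ^ 2 - c ^ 2), show a ^ 2 * (2 * b ^ 2 + 2 * c ^ 2 - a ^ 2) =
      (a+b+c)*(b+c-a)*(c+a-b)*(a+b-c) + (b ^ 2 - c ^ 2) ^ 2 by ring]
  refine ⟨⟨h₁, h₂, h₃⟩, √l, Real.sqrt_pos.mpr hl_pos, ?_, ?_, ?_⟩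
  · exact Real.eq_sqrt_mul_of_sq_eq_mul_sq dist_nonneg dist_nonneg (ha ▸ h₁)
  · exact Real.eq_sqrt_mul_of_sq_eq_mul_sq dist_nonneg dist_nonneg (hb ▸ h₂)
  · exact Real.eq_sqrt_mul_of_sq_eq_mul_sq dist_nonneg dist_nonneg (hc ▸ h₃)
end InnerProductSpace
end

section
/- Let m = b²(2c² + 2a² − b²)/Δ, where Δ = (a+b+c)(b+c−a)(c+a−b)(a+b−c). Then (dist bB bC)² = m·a², (dist bC bA)² = m·b², and (dist bA bB)² = m·c²; hence triangle bA bB bC is similar to triangle ABC. -/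
open EuclideanGeometry RealInnerProductSpace

/-!
Measure everything from `A` with `u = B - A` and `v = C - A`. The defining conditions give the
inner products of `bA - A`, `bB - A`, `bC - A` with `u` and `v` at once; for `bB`, the circumcenter
lies on the perpendicular bisector of `CA`, so its reflection in `CA` is `A + C - O`. In the plane
a vector `d` is recovered from `⟪d, u⟫` and `⟪d, v⟫`, and `‖d‖²` times the Gram determinant
`‖u‖²‖v‖² - ⟪u, v⟫²` is an explicit quadratic form in them. Since four times that Gram determinant
is Heron's product `Δ`, each squared side of `bA bB bC` times `Δ` becomes a polynomial in `a, b, c`.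
-/

def heronProduct (a b c : ℝ) : ℝ := (a + b + c) * (b + c - a) * (c + a - b) * (a + b - c)

theorem heronProduct_pos {a b c : ℝ} (ha : a < b + c) (hb : b < c + a) (hc : c < a + b) :
    0 < heronProduct a b c :=
  mul_pos (mul_pos (mul_pos (by linarith) (by linarith)) (by linarith)) (by linarith)

theorem eq_sqrt_mul_of_sq_eq {x y m : ℝ} (hx : 0 ≤ x) (hy : 0 ≤ y) (h : x ^ 2 = m * y ^ 2) :
    x = √m * y := by
  rw [← Real.sqrt_sq hx, h, Real.sqrt_mul' m (sq_nonneg y), Real.sqrt_sq hy]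

section

variable {V P : Type*} [NormedAddCommGroup V] [InnerProductSpace ℝ V] [MetricSpace P]
  [NormedAddTorsor V P]

theorem heronProduct_norm_sub_eq (u v : V) :
    heronProduct ‖u - v‖ ‖v‖ ‖u‖ = 4 * (‖u‖ ^ 2 * ‖v‖ ^ 2 - ⟪u, v⟫ ^ 2) := by
  unfold heronProduct
  linear_combination (‖u‖ ^ 2 + ‖v‖ ^ 2 - ‖u - v‖ ^ 2 + 2 * ⟪u, v⟫) * norm_sub_sq_real u v

theorem norm_sq_mul_gram_eq_of_finrank_eq_two (hV : Module.finrank ℝ V = 2) (d u v : V) :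
    ‖d‖ ^ 2 * (‖u‖ ^ 2 * ‖v‖ ^ 2 - ⟪u, v⟫ ^ 2) =
      ‖v‖ ^ 2 * ⟪d, u⟫ ^ 2 - 2 * ⟪u, v⟫ * ⟪d, u⟫ * ⟪d, v⟫ + ‖u‖ ^ 2 * ⟪d, v⟫ ^ 2 := by
  have : FiniteDimensional ℝ V := Module.finite_of_finrank_eq_succ hV
  let e := ((stdOrthonormalBasis ℝ V).reindex (finCongr hV)).repr
  simp only [← e.norm_map, ← e.inner_map_map, EuclideanSpace.real_norm_sq_eq, PiLp.inner_apply,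
    RCLike.inner_apply, conj_trivial, Fin.sum_univ_two]
  ring

theorem dist_sq_mul_gram_eq_of_finrank_eq_two (hV : Module.finrank ℝ V = 2) (X Y A : P)
    (u v : V) :
    dist X Y ^ 2 * (‖u‖ ^ 2 * ‖v‖ ^ 2 - ⟪u, v⟫ ^ 2) =
      ‖v‖ ^ 2 * (⟪X -ᵥ A, u⟫ - ⟪Y -ᵥ A, u⟫) ^ 2
        - 2 * ⟪u, v⟫ * (⟪X -ᵥ A, u⟫ - ⟪Y -ᵥ A, u⟫) * (⟪X -ᵥ A, v⟫ - ⟪Y -ᵥ A, v⟫)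
        + ‖u‖ ^ 2 * (⟪X -ᵥ A, v⟫ - ⟪Y -ᵥ A, v⟫) ^ 2 := by
  rw [dist_eq_norm_vsub V, ← vsub_sub_vsub_cancel_right X Y A, ← inner_sub_left, ← inner_sub_left]
  exact norm_sq_mul_gram_eq_of_finrank_eq_two hV _ u v

theorem dist_lt_dist_add_dist_of_affineIndependent {A B C : P}
    (h : AffineIndependent ℝ ![A, B, C]) :
    dist B C < dist C A + dist A B ∧ dist C A < dist A B + dist B C ∧
      dist A B < dist B C + dist C A := by
  have hcol := affineIndependent_iff_not_collinear_set.1 h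
  have ha : dist B C < dist B A + dist A C := dist_lt_dist_add_dist_iff.2 fun hw =>
    hcol (by simpa only [Set.insert_comm] using hw.collinear)
  have hb : dist A C < dist A B + dist B C := dist_lt_dist_add_dist_iff.2 fun hw =>
    hcol hw.collinear
  have hc : dist A B < dist A C + dist C B := dist_lt_dist_add_dist_iff.2 fun hw =>
    hcol (by simpa only [Set.pair_comm] using hw.collinear)
  rw [dist_comm B A, dist_comm A C] at ha
  rw [dist_comm A C] at hb
  rw [dist_comm A C, dist_comm C B] at hc
  exact ⟨by linarith, by linarith, by linarith⟩

theorem inner_vsub_vsub_of_dist_eq {p p₁ p₂ : P} (h : dist p p₁ = dist p p₂) :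
    ⟪p -ᵥ p₁, p₂ -ᵥ p₁⟫ = ‖p₂ -ᵥ p₁‖ ^ 2 / 2 := by
  rw [← dist_eq_norm_vsub' V]
  exact AffineSubspace.mem_perpBisector_iff_inner_eq.1
    (AffineSubspace.mem_perpBisector_iff_dist_eq.2 h)

theorem inner_vsub_vsub_of_dist_eq_of_inner_eq_zero {Z A B C : P} (hB : dist Z B = dist Z C)
    (hA : ⟪Z -ᵥ C, A -ᵥ C⟫ = 0) :
    ⟪Z -ᵥ A, B -ᵥ A⟫ = (‖B -ᵥ A‖ ^ 2 + ‖C -ᵥ A‖ ^ 2) / 2 ∧ ⟪Z -ᵥ A, C -ᵥ A⟫ = ‖C -ᵥ A‖ ^ 2 := by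
  have hv : ⟪Z -ᵥ C, C -ᵥ A⟫ = 0 := by
    rw [← neg_vsub_eq_vsub_rev A C, inner_neg_right, hA, neg_zero]
  have hu := inner_vsub_vsub_of_dist_eq hB.symm
  rw [← vsub_sub_vsub_cancel_right B C A, inner_sub_right, hv, sub_zero, norm_sub_sq_real] at hu
  rw [← vsub_add_vsub_cancel Z C A, inner_add_left, inner_add_left, hu, hv,
    real_inner_self_eq_norm_sq, real_inner_comm]
  constructor <;> ring

theorem EuclideanGeometry.reflection_affineSpan_pair_eq_pointReflection_of_dist_eq
    {p p₁ p₂ : P} (h : dist p p₁ = dist p p₂) :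
    reflection line[ℝ, p₁, p₂] p = Equiv.pointReflection (midpoint ℝ p₁ p₂) p := by
  have hperp : p -ᵥ midpoint ℝ p₁ p₂ ∈ (line[ℝ, p₁, p₂]).directionᗮ := by
    rw [direction_affineSpan, vectorSpan_pair, Submodule.mem_orthogonal_singleton_iff_inner_right,
      ← neg_vsub_eq_vsub_rev p₂ p₁, inner_neg_left, neg_eq_zero, real_inner_comm]
    exact AffineSubspace.mem_perpBisector_iff_inner_eq_zero.1
      (AffineSubspace.mem_perpBisector_iff_dist_eq.2 h)
  have hmid : midpoint ℝ p₁ p₂ ∈ line[ℝ, p₁, p₂] := AffineMap.lineMap_mem_affineSpan_pair _ _ _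
  rw [reflection_apply_of_mem _ p hmid,
    Submodule.reflection_mem_subspace_orthogonalComplement_eq_neg hperp,
    Equiv.pointReflection_apply, neg_vsub_eq_vsub_rev]

theorem dist_sq_mul_heronProduct_eq (hV : Module.finrank ℝ V = 2) {A B C O bA bB bC : P}
    (hOB : dist O A = dist O B) (hOC : dist O A = dist O C)
    (hbB : bB = reflection line[ℝ, C, A] O)
    (hbA1 : dist bA B = dist bA A) (hbA2 : ⟪bA -ᵥ A, C -ᵥ A⟫ = 0)
    (hbC1 : dist bC B = dist bC C) (hbC2 : ⟪bC -ᵥ C, A -ᵥ C⟫ = 0) :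
    let a := dist B C; let b := dist C A; let c := dist A B
    dist bB bC ^ 2 * heronProduct a b c = b ^ 2 * (2 * c ^ 2 + 2 * a ^ 2 - b ^ 2) * a ^ 2 ∧
    dist bC bA ^ 2 * heronProduct a b c = b ^ 2 * (2 * c ^ 2 + 2 * a ^ 2 - b ^ 2) * b ^ 2 ∧
    dist bA bB ^ 2 * heronProduct a b c = b ^ 2 * (2 * c ^ 2 + 2 * a ^ 2 - b ^ 2) * c ^ 2 := by
  intro a b c
  obtain ⟨hbCu, hbCv⟩ := inner_vsub_vsub_of_dist_eq_of_inner_eq_zero hbC1 hbC2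
  have hbBA : bB -ᵥ A = (C -ᵥ A) - (O -ᵥ A) := by
    rw [hbB, reflection_affineSpan_pair_eq_pointReflection_of_dist_eq hOC.symm,
      Equiv.pointReflection_apply, vadd_vsub_assoc, ← vsub_sub_vsub_cancel_right _ O A,
      midpoint_vsub_right, invOf_eq_inv]
    module
  have ha : a = ‖(B -ᵥ A) - (C -ᵥ A)‖ := by
    rw [vsub_sub_vsub_cancel_right]; exact dist_eq_norm_vsub V B C
  have hb : b = ‖C -ᵥ A‖ := dist_eq_norm_vsub V C A
  have hc : c = ‖B -ᵥ A‖ := dist_eq_norm_vsub' V A B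
  have hab : a ^ 2 = ‖B -ᵥ A‖ ^ 2 + ‖C -ᵥ A‖ ^ 2 - 2 * ⟪B -ᵥ A, C -ᵥ A⟫ := by
    rw [ha, norm_sub_sq_real]; ring
  have hheron : heronProduct a b c = 4 * (‖B -ᵥ A‖ ^ 2 * ‖C -ᵥ A‖ ^ 2 - ⟪B -ᵥ A, C -ᵥ A⟫ ^ 2) := by
    rw [← heronProduct_norm_sub_eq, ← ha, ← hb, ← hc]
  have hOu := inner_vsub_vsub_of_dist_eq hOB
  have hOv := inner_vsub_vsub_of_dist_eq hOC
  have hbAu := inner_vsub_vsub_of_dist_eq hbA1.symm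
  have hbBu : ⟪bB -ᵥ A, B -ᵥ A⟫ = ⟪B -ᵥ A, C -ᵥ A⟫ - ‖B -ᵥ A‖ ^ 2 / 2 := by
    rw [hbBA, inner_sub_left, hOu, real_inner_comm]
  have hbBv : ⟪bB -ᵥ A, C -ᵥ A⟫ = ‖C -ᵥ A‖ ^ 2 / 2 := by
    rw [hbBA, inner_sub_left, hOv, real_inner_self_eq_norm_sq]; ring
  have h₁ := dist_sq_mul_gram_eq_of_finrank_eq_two hV bB bC A (B -ᵥ A) (C -ᵥ A)
  have h₂ := dist_sq_mul_gram_eq_of_finrank_eq_two hV bC bA A (B -ᵥ A) (C -ᵥ A)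
  have h₃ := dist_sq_mul_gram_eq_of_finrank_eq_two hV bA bB A (B -ᵥ A) (C -ᵥ A)
  simp only [hbBu, hbBv, hbCu, hbCv, hbAu, hbA2] at h₁ h₂ h₃
  rw [hheron, hab, hb, hc]
  exact ⟨by linear_combination 4 * h₁, by linear_combination 4 * h₂, by linear_combination 4 * h₃⟩

end

theorem triangle_bA_bB_bC_similar
    (A B C O bA bB bC : EuclideanSpace ℝ (Fin 2))
    (hABC : AffineIndependent ℝ ![A, B, C])
    (a b c : ℝ) (ha : a = dist B C) (hb : b = dist C A) (hc : c = dist A B)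
    (hO : O = (⟨![A, B, C], hABC⟩ : Affine.Triangle ℝ (EuclideanSpace ℝ (Fin 2))).circumcenter)
    (hbB : bB = EuclideanGeometry.reflection (affineSpan ℝ {C, A}) O)
    (hbA1 : dist bA B = dist bA A) (hbA2 : ⟪bA - A, C - A⟫ = 0)
    (hbC1 : dist bC B = dist bC C) (hbC2 : ⟪bC - C, A - C⟫ = 0)
    (m : ℝ)
    (hm : m = b^2 * (2*c^2 + 2*a^2 - b^2) / ((a+b+c)*(b+c-a)*(c+a-b)*(a+b-c))) :
    ((dist bB bC)^2 = m * a^2 ∧ (dist bC bA)^2 = m * b^2 ∧ (dist bA bB)^2 = m * c^2) ∧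
    ∃ r : ℝ, 0 < r ∧ dist bB bC = r * dist B C ∧ dist bC bA = r * dist C A ∧
      dist bA bB = r * dist A B := by
  have hOr := (⟨![A, B, C], hABC⟩ : Affine.Triangle ℝ _).dist_circumcenter_eq_circumradius'
  rw [← hO] at hOr
  obtain ⟨h₁, h₂, h₃⟩ := dist_sq_mul_heronProduct_eq (A := A) (B := B) (C := C)
    finrank_euclideanSpace_fin ((hOr 0).trans (hOr 1).symm) ((hOr 0).trans (hOr 2).symm)
    hbB hbA1 hbA2 hbC1 hbC2
  obtain ⟨hta, htb, htc⟩ := dist_lt_dist_add_dist_of_affineIndependent hABC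
  rw [← ha, ← hb, ← hc] at h₁ h₂ h₃ hta htb htc ⊢
  have hΔ := heronProduct_pos hta htb htc
  have hm' : m = b ^ 2 * (2 * c ^ 2 + 2 * a ^ 2 - b ^ 2) / heronProduct a b c := hm
  have hsq {x y : ℝ} (h : x * heronProduct a b c = b ^ 2 * (2 * c ^ 2 + 2 * a ^ 2 - b ^ 2) * y) :
      x = m * y := by
    rw [hm', div_mul_eq_mul_div, eq_div_iff hΔ.ne', h]
  have hm_pos : 0 < m := by
    have hb_pos : 0 < b := by linarith
    rw [hm']
    refine div_pos (mul_pos (pow_pos hb_pos 2) ?_) hΔ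
    nlinarith [mul_lt_mul'' htb htb hb_pos.le hb_pos.le, sq_nonneg (c - a)]
  refine ⟨⟨hsq h₁, hsq h₂, hsq h₃⟩, √m, Real.sqrt_pos.2 hm_pos, ?_, ?_, ?_⟩ <;>
    exact eq_sqrt_mul_of_sq_eq dist_nonneg (by linarith) (hsq ‹_›)
end

section
/- Let k = (3a²b²c²(a² + b² + c²) + 2(b⁴c⁴ + c⁴a⁴ + a⁴b⁴) − a⁶(b² + c²) − b⁶(c² + a²) − c⁶(a² + b²))/Δ², where Δ = (a+b+c)(b+c−a)(c+a−b)(a+b−c). Then (dist bC aB)² = k·a², (dist cA bC)² = k·b², and (dist aB cA)² = k·c²; hence triangle cA aB bC is similar to triangle ABC. -/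
open EuclideanGeometry RealInnerProductSpace

private lemma gram_formula {E : Type*} [NormedAddCommGroup E] [InnerProductSpace ℝ E]
    (u v : E) (α β : ℝ) :
    (⟪u,u⟫ * ⟪v,v⟫ - ⟪u,v⟫^2) * ‖α • u + β • v‖^2 =
      ⟪v,v⟫*⟪α•u+β•v,u⟫^2 - 2*⟪u,v⟫*⟪α•u+β•v,u⟫*⟪α•u+β•v,v⟫ + ⟪u,u⟫*⟪α•u+β•v,v⟫^2 := by
  rw [← real_inner_self_eq_norm_sq]
  simp only [inner_add_left, inner_add_right, real_inner_smul_left, real_inner_smul_right]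
  rw [real_inner_comm v u]
  ring

set_option maxHeartbeats 1000000 in
theorem triangle_cA_aB_bC_similar
    (A B C aB bC cA : EuclideanSpace ℝ (Fin 2))
    (hABC : AffineIndependent ℝ ![A, B, C])
    (a b c : ℝ) (ha : a = dist B C) (hb : b = dist C A) (hc : c = dist A B)
    (haB1 : dist aB A = dist aB B) (haB2 : ⟪aB - B, C - B⟫ = 0)
    (hbC1 : dist bC B = dist bC C) (hbC2 : ⟪bC - C, A - C⟫ = 0)
    (hcA1 : dist cA C = dist cA A) (hcA2 : ⟪cA - A, B - A⟫ = 0)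
    (k : ℝ)
    (hk : k = (3*a^2*b^2*c^2*(a^2 + b^2 + c^2) + 2*(b^4*c^4 + c^4*a^4 + a^4*b^4)
        - a^6*(b^2 + c^2) - b^6*(c^2 + a^2) - c^6*(a^2 + b^2)) /
        ((a+b+c)*(b+c-a)*(c+a-b)*(a+b-c))^2) :
    ((dist bC aB)^2 = k * a^2 ∧ (dist cA bC)^2 = k * b^2 ∧ (dist aB cA)^2 = k * c^2) ∧
    ∃ r : ℝ, 0 < r ∧ dist aB bC = r * dist B C ∧ dist bC cA = r * dist C A ∧
      dist cA aB = r * dist A B := by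
  obtain ⟨u, hu⟩ : ∃ u : EuclideanSpace ℝ (Fin 2), u = A - B := ⟨_, rfl⟩
  obtain ⟨v, hv⟩ : ∃ v : EuclideanSpace ℝ (Fin 2), v = C - B := ⟨_, rfl⟩
  obtain ⟨x, hx⟩ : ∃ x : EuclideanSpace ℝ (Fin 2), x = aB - B := ⟨_, rfl⟩
  obtain ⟨y, hy⟩ : ∃ y : EuclideanSpace ℝ (Fin 2), y = bC - B := ⟨_, rfl⟩
  obtain ⟨z, hz⟩ : ∃ z : EuclideanSpace ℝ (Fin 2), z = cA - B := ⟨_, rfl⟩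
  -- positivity of side lengths
  have hBC : B ≠ C := by
    intro h
    have : (1 : Fin 3) = 2 := hABC.injective (by simpa using h)
    simp at this
  have hCA : C ≠ A := by
    intro h
    have : (2 : Fin 3) = 0 := hABC.injective (by simpa using h)
    simp at this
  have hAB : A ≠ B := by
    intro h
    have : (0 : Fin 3) = 1 := hABC.injective (by simpa using h)
    simp at this
  have ha0 : 0 < a := ha ▸ dist_pos.mpr hBC
  have hb0 : 0 < b := hb ▸ dist_pos.mpr hCA
  have hc0 : 0 < c := hc ▸ dist_pos.mpr hAB
  -- norms
  have hc2 : ‖u‖^2 = c^2 := by rw [hu, hc, dist_eq_norm]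
  have ha2 : ‖v‖^2 = a^2 := by rw [hv, ha, dist_eq_norm, norm_sub_rev]
  have huu : ⟪u,u⟫ = c^2 := by rw [real_inner_self_eq_norm_sq, hc2]
  have hvv : ⟪v,v⟫ = a^2 := by rw [real_inner_self_eq_norm_sq, ha2]
  have hb2 : b^2 = a^2 - 2*⟪u,v⟫ + c^2 := by
    have e : C - A = v - u := by rw [hu, hv]; abel
    rw [hb, dist_eq_norm, e, norm_sub_sq_real, real_inner_comm v u, hc2, ha2]
  have huv : ⟪u,v⟫ = (a^2+c^2-b^2)/2 := by linarith
  -- linear independence of u, v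
  have hpair : ∀ s t : ℝ, s • u + t • v = 0 → s = 0 ∧ t = 0 := by
    intro s t hst
    rw [affineIndependent_iff_of_fintype] at hABC
    have hwsum : ∑ i, (![s, -(s+t), t]) i = 0 := by
      rw [Fin.sum_univ_three]
      show s + -(s+t) + t = 0
      ring
    have hcomb : Finset.univ.weightedVSub ![A, B, C] ![s, -(s+t), t]
        = (0 : EuclideanSpace ℝ (Fin 2)) := by
      rw [Finset.weightedVSub_eq_linear_combination _ hwsum]
      have e : ∑ i, (![s, -(s+t), t]) i • (![A, B, C]) i = s • u + t • v := by
        rw [Fin.sum_univ_three]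
        show s • A + (-(s+t)) • B + t • C = s • u + t • v
        rw [hu, hv]
        module
      rw [e, hst]
    have h := hABC ![s, -(s+t), t] hwsum hcomb
    exact ⟨by simpa using h 0, by simpa using h 2⟩
  have hli : LinearIndependent ℝ ![u, v] := by
    rw [linearIndependent_fin2]
    constructor
    · show v ≠ 0
      intro h
      have h0 : (0:ℝ) • u + (1:ℝ) • v = 0 := by rw [h]; simp
      exact one_ne_zero ((hpair 0 1 h0).2)
    · intro r h
      have h' : r • v = u := h
      have h0 : (1:ℝ) • u + (-r) • v = 0 := by
        rw [one_smul, neg_smul, ← h']; abel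
      exact one_ne_zero ((hpair 1 (-r) h0).1)
  -- span
  have hcard : Fintype.card (Fin 2) = Module.finrank ℝ (EuclideanSpace ℝ (Fin 2)) := by
    simp [finrank_euclideanSpace_fin]
  have hspan : ∀ d : EuclideanSpace ℝ (Fin 2), ∃ α β : ℝ, d = α • u + β • v := by
    intro d
    set Bs := basisOfLinearIndependentOfCardEqFinrank hli hcard with hBs
    refine ⟨Bs.repr d 0, Bs.repr d 1, ?_⟩
    have h := Bs.sum_repr d
    rw [Fin.sum_univ_two] at h
    have hcoe : ⇑Bs = ![u, v] := by
      rw [hBs]; exact coe_basisOfLinearIndependentOfCardEqFinrank _ _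
    rw [hcoe] at h
    simp only [Matrix.cons_val_zero, Matrix.cons_val_one, Matrix.head_cons] at h
    exact h.symm
  -- Gram determinant is positive
  have hGge : (0:ℝ) ≤ ⟪u,u⟫*⟪v,v⟫ - ⟪u,v⟫^2 := by
    have h1 := abs_real_inner_le_norm u v
    have h2 : ⟪u,v⟫^2 ≤ (‖u‖*‖v‖)^2 := by
      rw [← sq_abs]
      exact pow_le_pow_left₀ (abs_nonneg _) h1 2
    have h3 : (‖u‖*‖v‖)^2 = ⟪u,u⟫*⟪v,v⟫ := by
      rw [real_inner_self_eq_norm_sq, real_inner_self_eq_norm_sq]; ring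
    linarith
  have hGne : ⟪u,u⟫*⟪v,v⟫ - ⟪u,v⟫^2 ≠ 0 := by
    intro h
    have hww : ⟪⟪v,v⟫ • u - ⟪u,v⟫ • v, ⟪v,v⟫ • u - ⟪u,v⟫ • v⟫
        = ⟪v,v⟫*(⟪u,u⟫*⟪v,v⟫ - ⟪u,v⟫^2) := by
      simp only [inner_sub_left, inner_sub_right, real_inner_smul_left, real_inner_smul_right]
      rw [real_inner_comm v u]; ring
    rw [h, mul_zero] at hww
    have hw0 : ⟪v,v⟫ • u + (-⟪u,v⟫) • v = 0 := by
      rw [neg_smul, ← sub_eq_add_neg, inner_self_eq_zero.mp hww]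
    have hv0 := (hpair _ _ hw0).1
    rw [hvv] at hv0
    nlinarith
  have hGpos : (0:ℝ) < ⟪u,u⟫*⟪v,v⟫ - ⟪u,v⟫^2 := lt_of_le_of_ne hGge (Ne.symm hGne)
  have hDelta : (a+b+c)*(b+c-a)*(c+a-b)*(a+b-c) = 4*(⟪u,u⟫*⟪v,v⟫ - ⟪u,v⟫^2) := by
    rw [huu, hvv, huv]; ring
  have hDpos : 0 < (a+b+c)*(b+c-a)*(c+a-b)*(a+b-c) := by rw [hDelta]; linarith
  have hDne : (a+b+c)*(b+c-a)*(c+a-b)*(a+b-c) ≠ 0 := ne_of_gt hDpos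
  have hD2ne : (((a+b+c)*(b+c-a)*(c+a-b)*(a+b-c))^2 : ℝ) ≠ 0 := pow_ne_zero 2 hDne
  -- inner products of the center offsets
  have h1v : ⟪x, v⟫ = 0 := by rw [hx, hv]; exact haB2
  have h1u : 2*⟪x, u⟫ = c^2 := by
    have q : ‖x - u‖^2 = ‖x‖^2 := by
      rw [show x - u = aB - A by rw [hx, hu]; abel, hx, ← dist_eq_norm, ← dist_eq_norm, haB1]
    rw [norm_sub_sq_real, hc2] at q
    linarith
  have h2v : 2*⟪y, v⟫ = a^2 := by
    have q : ‖y‖^2 = ‖y - v‖^2 := by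
      rw [show y - v = bC - C by rw [hy, hv]; abel, hy, ← dist_eq_norm, ← dist_eq_norm, hbC1]
    rw [norm_sub_sq_real, ha2] at q
    linarith
  have h2u : 2*⟪y, u⟫ = c^2 - b^2 := by
    have e : ⟪y - v, u - v⟫ = 0 := by
      rw [show y - v = bC - C by rw [hy, hv]; abel, show u - v = A - C by rw [hu, hv]; abel]
      exact hbC2
    simp only [inner_sub_left, inner_sub_right] at e
    have hcomm : ⟪v,u⟫ = ⟪u,v⟫ := real_inner_comm u v
    linarith [e, hcomm, hvv, huv, h2v]
  have h3u : ⟪z, u⟫ = c^2 := by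
    have e : ⟪z - u, -u⟫ = 0 := by
      rw [show z - u = cA - A by rw [hz, hu]; abel, show -u = B - A by rw [hu]; abel]
      exact hcA2
    rw [inner_sub_left, inner_neg_right, inner_neg_right, huu] at e
    linarith
  have h3v : 2*⟪z, v⟫ = a^2 + c^2 := by
    have q : ‖z - v‖^2 = ‖z - u‖^2 := by
      rw [show z - v = cA - C by rw [hz, hv]; abel, show z - u = cA - A by rw [hz, hu]; abel,
        ← dist_eq_norm, ← dist_eq_norm, hcA1]
    rw [norm_sub_sq_real z v, norm_sub_sq_real z u, ha2, hc2, h3u] at q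
    linarith
  -- inner products of the differences
  have d1u : ⟪bC - aB, u⟫ = -(b^2)/2 := by
    rw [show bC - aB = y - x by rw [hx, hy]; abel, inner_sub_left]; linarith
  have d1v : ⟪bC - aB, v⟫ = a^2/2 := by
    rw [show bC - aB = y - x by rw [hx, hy]; abel, inner_sub_left]; linarith
  have d2u : ⟪cA - bC, u⟫ = (b^2+c^2)/2 := by
    rw [show cA - bC = z - y by rw [hy, hz]; abel, inner_sub_left]; linarith
  have d2v : ⟪cA - bC, v⟫ = c^2/2 := by
    rw [show cA - bC = z - y by rw [hy, hz]; abel, inner_sub_left]; linarith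
  have d3u : ⟪aB - cA, u⟫ = -(c^2)/2 := by
    rw [show aB - cA = x - z by rw [hx, hz]; abel, inner_sub_left]; linarith
  have d3v : ⟪aB - cA, v⟫ = -(a^2+c^2)/2 := by
    rw [show aB - cA = x - z by rw [hx, hz]; abel, inner_sub_left]; linarith
  -- the three squared distances
  have gram : ∀ d : EuclideanSpace ℝ (Fin 2),
      (⟪u,u⟫ * ⟪v,v⟫ - ⟪u,v⟫^2) * ‖d‖^2 =
      ⟪v,v⟫*⟪d,u⟫^2 - 2*⟪u,v⟫*⟪d,u⟫*⟪d,v⟫ + ⟪u,u⟫*⟪d,v⟫^2 := by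
    intro d
    obtain ⟨α, β, hd⟩ := hspan d
    rw [hd]
    exact gram_formula u v α β
  have hG1 := gram (bC - aB)
  have hG2 := gram (cA - bC)
  have hG3 := gram (aB - cA)
  rw [d1u, d1v, huu, hvv, huv] at hG1
  rw [d2u, d2v, huu, hvv, huv] at hG2
  rw [d3u, d3v, huu, hvv, huv] at hG3
  have key1 : (dist bC aB)^2 = k * a^2 := by
    rw [hk, dist_eq_norm, div_mul_eq_mul_div, eq_div_iff hD2ne]
    linear_combination (4*((a+b+c)*(b+c-a)*(c+a-b)*(a+b-c))) * hG1
  have key2 : (dist cA bC)^2 = k * b^2 := by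
    rw [hk, dist_eq_norm, div_mul_eq_mul_div, eq_div_iff hD2ne]
    linear_combination (4*((a+b+c)*(b+c-a)*(c+a-b)*(a+b-c))) * hG2
  have key3 : (dist aB cA)^2 = k * c^2 := by
    rw [hk, dist_eq_norm, div_mul_eq_mul_div, eq_div_iff hD2ne]
    linear_combination (4*((a+b+c)*(b+c-a)*(c+a-b)*(a+b-c))) * hG3
  have hkpos : 0 < k := by
    have hkS : k = (a^2*b^2+b^2*c^2+c^2*a^2)/((a+b+c)*(b+c-a)*(c+a-b)*(a+b-c)) := by
      rw [hk, div_eq_div_iff hD2ne hDne]; ring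
    rw [hkS]
    apply div_pos _ hDpos
    positivity
  refine ⟨⟨key1, key2, key3⟩, Real.sqrt k, Real.sqrt_pos.mpr hkpos, ?_, ?_, ?_⟩
  · rw [dist_comm, ← ha, show dist bC aB = Real.sqrt ((dist bC aB)^2) from
      (Real.sqrt_sq dist_nonneg).symm, key1, Real.sqrt_mul hkpos.le, Real.sqrt_sq ha0.le]
  · rw [dist_comm, ← hb, show dist cA bC = Real.sqrt ((dist cA bC)^2) from
      (Real.sqrt_sq dist_nonneg).symm, key2, Real.sqrt_mul hkpos.le, Real.sqrt_sq hb0.le]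
  · rw [dist_comm, ← hc, show dist aB cA = Real.sqrt ((dist aB cA)^2) from
      (Real.sqrt_sq dist_nonneg).symm, key3, Real.sqrt_mul hkpos.le, Real.sqrt_sq hc0.le]
end
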